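/- arXiv:2108.10049 — 5 statements merged into one kernel-verified Lean document; each statement's English description precedes it below -/
import Mathlib

section
/- Let n ≥ 1, b > 0, 1 < p < ∞. Let c ∈ ℝⁿ with c ≠ 0, m > 0, x* ∈ ℝⁿ and R > 0, and set E_R(x*) := B_R(x*) ∖ B̄_{R/2}(x*) (an open annulus). Then there exists an infinitely differentiable function h : ℝⁿ ∖ {x*} → ℝ such that: (i) h(y) = 0 for every y with |y − x*| = R; (ii) 0 ≤ h(x) ≤ m for every x with R/2 ≤ |x − x*| ≤ R; (iii) ⟨∇h(y), (y − x*)/R⟩ < 0 for every y with |y − x*| = R; (iv) |∇h(x)| ≤ |c|/2 for every x ∈ E_R(x*); and (v) the function v(x) := h(x) + ⟨c, x⟩ satisfies ∇v(x) ≠ 0 for all x ∈ E_R(x*) and div(∇E(∇v))(x) ≥ 0 for all x ∈ E_R(x*), where E(z) := b|z| + |z|^p/p (so that the inequality in (v) expresses that v is a classical subsolution: b·div(∇v/|∇v|)(x) + div(|∇v|^{p−2}∇v)(x) ≥ 0). -/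
open MeasureTheory Set Metric Filter
open scoped RealInnerProductSpace Topology ENNReal

noncomputable section

/-- `φ` is a smooth test function compactly supported in `ω`. -/
def IsTestOn {n : ℕ} (ω : Set (EuclideanSpace ℝ (Fin n))) (φ : EuclideanSpace ℝ (Fin n) → ℝ) : Prop :=
  ContDiff ℝ (⊤ : ℕ∞) φ ∧ HasCompactSupport φ ∧ tsupport φ ⊆ ω

/-- The divergence of a vector field on Euclidean space, computed coordinatewise via `fderiv`. -/
def diverg {n : ℕ} (V : EuclideanSpace ℝ (Fin n) → EuclideanSpace ℝ (Fin n))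
    (x : EuclideanSpace ℝ (Fin n)) : ℝ :=
  ∑ i : Fin n, fderiv ℝ (fun y => V y i) x (EuclideanSpace.single i 1)

/-! Take the radial barrier `h(x) = ε (exp (-α |x - x*|) - exp (-α R))`. Its gradient has length
`a = ε α exp (-α r)` with `r = |x - x*|`, so for `ε α ≤ |c| / 2` the gradient `z = c + ∇h` of `v`
stays in the shell `|c| / 2 ≤ |z| ≤ 3 |c| / 2`. There `∇E(z) = K(|z|) z` with
`K(ρ) = (b + ρ^(p-1)) / ρ` (`energyCoeff b p`), and `D²E(z)` has the eigenvalues `K(ρ)`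
(tangential) and `(p - 1) ρ^(p-2)` (radial); by compactness of the shell both are at least some
`μ > 0`, and `(n - 1) K(ρ) + (p - 1) ρ^(p-2)` is at most some `M`.
In `div ∇E(∇v) = tr (D²E(z) D²h)` the radial second derivative of `h`, of size `α a`, meets
`D²E ≥ μ`, while all other terms are `O(a / r)`; since `r > R / 2`, a large `α` wins. -/

open Real

section RadialCalculus

variable {F : Type*} [NormedAddCommGroup F] [InnerProductSpace ℝ F]

theorem hasFDerivAt_norm_of_ne_zero {x : F} (hx : x ≠ 0) :
    HasFDerivAt (‖·‖) (‖x‖⁻¹ • innerSL ℝ x) x := by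
  have hx' : ‖x‖ ^ 2 ≠ 0 := by positivity
  convert (hasStrictFDerivAt_norm_sq x).hasFDerivAt.sqrt hx' using 1
  · simp [sqrt_sq (norm_nonneg _)]
  · ext y
    simp [sqrt_sq (norm_nonneg _)]
    field_simp

def radialField (φ : ℝ → ℝ) (z : F) : F := φ ‖z‖ • z

theorem hasFDerivAt_radialField {φ : ℝ → ℝ} {φ' : ℝ} {z : F} (hz : z ≠ 0)
    (hφ : HasDerivAt φ φ' ‖z‖) :
    HasFDerivAt (radialField φ)
      (φ ‖z‖ • ContinuousLinearMap.id ℝ F + ((φ' / ‖z‖) • innerSL ℝ z).smulRight z) z := by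
  refine ((hφ.comp_hasFDerivAt z (hasFDerivAt_norm_of_ne_zero hz)).smul
    (hasFDerivAt_id z)).congr_fderiv ?_
  rw [smul_smul, div_eq_mul_inv]
  rfl

theorem hasGradientAt_comp_norm_sub [CompleteSpace F] {φ : ℝ → ℝ} {φ' : ℝ} {x x₀ : F}
    (hx : x ≠ x₀) (hφ : HasDerivAt φ φ' ‖x - x₀‖) :
    HasGradientAt (fun y ↦ φ ‖y - x₀‖) ((φ' / ‖x - x₀‖) • (x - x₀)) x := by
  have hnorm := (hasFDerivAt_norm_of_ne_zero (sub_ne_zero.2 hx)).comp x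
    ((hasFDerivAt_id x).sub_const x₀)
  rw [hasGradientAt_iff_hasFDerivAt]
  refine (hφ.comp_hasFDerivAt x hnorm).congr_fderiv ?_
  ext y
  simp [div_eq_mul_inv, mul_assoc]

end RadialCalculus

section Trace

variable {E : Type*} [NormedAddCommGroup E] [InnerProductSpace ℝ E] [FiniteDimensional ℝ E]

theorem trace_smul_id_add_smulRight_comp (a : ℝ) (f : StrongDual ℝ E) (v : E) (B : E →L[ℝ] E) :
    LinearMap.trace ℝ E ((a • ContinuousLinearMap.id ℝ E + f.smulRight v).comp B) =
      a * LinearMap.trace ℝ E B + f (B v) := by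
  have : ((a • ContinuousLinearMap.id ℝ E + f.smulRight v).comp B : E →ₗ[ℝ] E) =
      a • (B : E →ₗ[ℝ] E) + (f.comp B : E →ₗ[ℝ] ℝ).smulRight v := by
    ext; simp
  rw [this, map_add, map_smul, LinearMap.trace_smulRight]
  rfl

end Trace

theorem HasFDerivAt.diverg_eq {n : ℕ} {V : EuclideanSpace ℝ (Fin n) → EuclideanSpace ℝ (Fin n)}
    {L : EuclideanSpace ℝ (Fin n) →L[ℝ] EuclideanSpace ℝ (Fin n)} {x : EuclideanSpace ℝ (Fin n)}
    (hV : HasFDerivAt V L x) :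
    diverg V x =
      LinearMap.trace ℝ _ (L : EuclideanSpace ℝ (Fin n) →ₗ[ℝ] EuclideanSpace ℝ (Fin n)) := by
  rw [LinearMap.trace_eq_sum_inner _ (EuclideanSpace.basisFun (Fin n) ℝ), diverg]
  refine Finset.sum_congr rfl fun i _ ↦ ?_
  have hVi : HasFDerivAt (fun y ↦ V y i) ((EuclideanSpace.proj i).comp L) x :=
    ((EuclideanSpace.proj i).hasFDerivAt.comp x hV :)
  simp [hVi.fderiv, EuclideanSpace.inner_single_left]

theorem diverg_radialField_comp_eq {n : ℕ} {K g : ℝ → ℝ} {K' g' : ℝ}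
    {V : EuclideanSpace ℝ (Fin n) → EuclideanSpace ℝ (Fin n)} {x x₀ c : EuclideanSpace ℝ (Fin n)}
    (hx : x ≠ x₀) (hz : c + radialField g (x - x₀) ≠ 0)
    (hK : HasDerivAt K K' ‖c + radialField g (x - x₀)‖) (hg : HasDerivAt g g' ‖x - x₀‖)
    (hV : V =ᶠ[𝓝 x] fun y ↦ radialField K (c + radialField g (y - x₀))) :
    diverg V x =
      K ‖c + radialField g (x - x₀)‖ * (g ‖x - x₀‖ * n + g' / ‖x - x₀‖ * ‖x - x₀‖ ^ 2) +
        K' / ‖c + radialField g (x - x₀)‖ * (g ‖x - x₀‖ * ‖c + radialField g (x - x₀)‖ ^ 2 +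
          g' / ‖x - x₀‖ * ⟪x - x₀, c + radialField g (x - x₀)⟫ ^ 2) := by
  set u := x - x₀
  set z := c + radialField g u
  have hZ : HasFDerivAt (fun y ↦ c + radialField g (y - x₀))
      (g ‖u‖ • ContinuousLinearMap.id ℝ _ + ((g' / ‖u‖) • innerSL ℝ u).smulRight u) x := by
    have hu : HasFDerivAt (fun y ↦ y - x₀) (ContinuousLinearMap.id ℝ _) x :=
      (hasFDerivAt_id x).sub_const x₀
    exact ((hasFDerivAt_radialField (sub_ne_zero.2 hx) hg).comp x hu).const_add c
  have htrace := trace_smul_id_add_smulRight_comp (g ‖u‖) ((g' / ‖u‖) • innerSL ℝ u) u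
    (ContinuousLinearMap.id ℝ _)
  rw [ContinuousLinearMap.comp_id] at htrace
  rw [((hasFDerivAt_radialField hz hK).comp x hZ).congr_of_eventuallyEq hV |>.diverg_eq,
    trace_smul_id_add_smulRight_comp, htrace]
  simp [LinearMap.trace_id, real_inner_smul_right, inner_add_right, real_inner_comm]
  ring_nf
  simp

theorem HasDerivAt.div_id {f : ℝ → ℝ} {f' t : ℝ} (hf : HasDerivAt f f' t) (ht : t ≠ 0) :
    HasDerivAt (fun s ↦ f s / s) ((f' - f t / t) / t) t :=
  (hf.div (hasDerivAt_id' t) ht).congr_deriv (by field_simp)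

def energyCoeff (b p t : ℝ) : ℝ := (b + t ^ (p - 1)) / t

theorem hasDerivAt_energyCoeff (b p : ℝ) {t : ℝ} (ht : 0 < t) :
    HasDerivAt (energyCoeff b p) (((p - 1) * t ^ (p - 2) - energyCoeff b p t) / t) t := by
  have h := ((hasDerivAt_rpow_const (p := p - 1) (Or.inl ht.ne')).const_add b).div_id ht.ne'
  rwa [show p - 1 - 1 = p - 2 by ring] at h

theorem exists_energyCoeff_bounds (b p N : ℝ) (hb : 0 ≤ b) (hp : 1 < p) {ρ₁ ρ₂ : ℝ}
    (hρ₁ : 0 < ρ₁) :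
    ∃ μ > 0, ∃ M, ∀ ρ ∈ Icc ρ₁ ρ₂, μ ≤ energyCoeff b p ρ ∧ μ ≤ (p - 1) * ρ ^ (p - 2) ∧
      N * energyCoeff b p ρ + (p - 1) * ρ ^ (p - 2) ≤ M := by
  have hpos : ∀ ρ ∈ Icc ρ₁ ρ₂, 0 < ρ := fun ρ hρ ↦ hρ₁.trans_le hρ.1
  have hrpow : ContinuousOn (fun ρ : ℝ ↦ ρ ^ (p - 2)) (Icc ρ₁ ρ₂) :=
    continuousOn_id.rpow_const fun ρ hρ ↦ Or.inl (hpos ρ hρ).ne'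
  have hκ : ContinuousOn (energyCoeff b p) (Icc ρ₁ ρ₂) :=
    (continuousOn_const.add (continuousOn_id.rpow_const fun ρ hρ ↦ Or.inl (hpos ρ hρ).ne')).div
      continuousOn_id fun ρ hρ ↦ (hpos ρ hρ).ne'
  have he : ContinuousOn (fun ρ ↦ (p - 1) * ρ ^ (p - 2)) (Icc ρ₁ ρ₂) :=
    continuousOn_const.mul hrpow
  obtain ⟨μ, hμ, hμ_le⟩ := isCompact_Icc.exists_forall_le' (hκ.inf he) (a := 0) fun ρ hρ ↦ by
    have := hpos ρ hρ
    exact lt_min (by unfold energyCoeff; positivity) (mul_pos (by linarith) (by positivity))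
  obtain ⟨M, hM⟩ := isCompact_Icc.bddAbove_image ((continuousOn_const.mul hκ).add he)
  exact ⟨μ, hμ, M, fun ρ hρ ↦ ⟨(hμ_le ρ hρ).trans (min_le_left _ _),
    (hμ_le ρ hρ).trans (min_le_right _ _), hM (mem_image_of_mem _ hρ)⟩⟩

def barrierCoeff (ε α t : ℝ) : ℝ := -(ε * α * exp (-(α * t))) / t

theorem hasDerivAt_barrierCoeff (ε α : ℝ) {t : ℝ} (ht : t ≠ 0) :
    HasDerivAt (barrierCoeff ε α) ((α * (ε * α * exp (-(α * t))) - barrierCoeff ε α t) / t) t := by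
  have hnum : HasDerivAt (fun s ↦ -(ε * α * exp (-(α * s)))) (α * (ε * α * exp (-(α * t)))) t :=
    ((((hasDerivAt_id' t).const_mul α).fun_neg.exp.const_mul (ε * α)).neg).congr_deriv (by ring)
  exact hnum.div_id ht

/-- With `s = t² / (ρ r)² ∈ [0, 1]` the expression equals
`a / r * ((α r + 1) ((1 - s) κ + s e) - ((n - 1) κ + e))`. -/
theorem radialDiverg_nonneg_of_bounds {n a α r ρ κ e t g g' μ M : ℝ} (ha : 0 ≤ a) (hα : 0 ≤ α)
    (hr : 0 < r) (hρ : 0 < ρ) (hg : g = -a / r) (hg' : g' = (α * a - g) / r)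
    (ht : |t| ≤ ρ * r) (hμ : 0 ≤ μ) (hκ : μ ≤ κ) (he : μ ≤ e)
    (hM : (n - 1) * κ + e ≤ M) (hαM : M ≤ α * r * μ) :
    0 ≤ κ * (g * n + g' / r * r ^ 2) + (e - κ) / ρ / ρ * (g * ρ ^ 2 + g' / r * t ^ 2) := by
  set s := t ^ 2 / (ρ ^ 2 * r ^ 2) with hs
  have hs₀ : 0 ≤ s := by positivity
  have hs₁ : s ≤ 1 :=
    div_le_one_of_le₀ (by rw [← mul_pow, ← sq_abs]; gcongr) (by positivity)
  have hconv : μ ≤ (1 - s) * κ + s * e := by nlinarith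
  have hexpand : κ * (g * n + g' / r * r ^ 2) + (e - κ) / ρ / ρ * (g * ρ ^ 2 + g' / r * t ^ 2) =
      a / r * ((α * r + 1) * ((1 - s) * κ + s * e) - ((n - 1) * κ + e)) := by
    rw [hs, hg', hg]
    field_simp
    ring
  rw [hexpand]
  have : 0 ≤ α * r := by positivity
  exact mul_nonneg (by positivity) (by nlinarith)

section RadialProfiles

variable {F : Type*} [NormedAddCommGroup F]

def barrier (x₀ : F) (ε α R : ℝ) (x : F) : ℝ := ε * (exp (-(α * ‖x - x₀‖)) - exp (-(α * R)))

theorem barrier_eq_zero {x₀ x : F} {ε α R : ℝ} (hx : ‖x - x₀‖ = R) : barrier x₀ ε α R x = 0 := by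
  simp [barrier, hx]

theorem barrier_nonneg {x₀ x : F} {ε α R : ℝ} (hε : 0 ≤ ε) (hα : 0 ≤ α) (hx : ‖x - x₀‖ ≤ R) :
    0 ≤ barrier x₀ ε α R x :=
  mul_nonneg hε (sub_nonneg.2 (exp_le_exp.2 (by nlinarith)))

theorem barrier_le {x₀ x : F} {ε α R : ℝ} (hε : 0 ≤ ε) (hα : 0 ≤ α) : barrier x₀ ε α R x ≤ ε := by
  have h1 : exp (-(α * ‖x - x₀‖)) ≤ 1 := exp_le_one_iff.2 (by nlinarith [norm_nonneg (x - x₀)])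
  have h2 := exp_pos (-(α * R))
  unfold barrier
  nlinarith

variable [InnerProductSpace ℝ F]

theorem contDiffOn_barrier (x₀ : F) (ε α R : ℝ) :
    ContDiffOn ℝ (⊤ : ℕ∞) (barrier x₀ ε α R) {x₀}ᶜ := fun _ hx ↦
  (contDiffAt_const.mul (((contDiffAt_const.mul ((contDiffAt_id.sub contDiffAt_const).norm ℝ
    (sub_ne_zero.2 hx))).neg.exp).sub contDiffAt_const)).contDiffWithinAt

theorem norm_radialField_barrierCoeff {ε α : ℝ} (hε : 0 ≤ ε) (hα : 0 ≤ α) {u : F} (hu : u ≠ 0) :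
    ‖radialField (barrierCoeff ε α) u‖ = ε * α * exp (-(α * ‖u‖)) := by
  have := norm_pos_iff.2 hu
  rw [radialField, norm_smul, barrierCoeff, norm_eq_abs, abs_div, abs_neg, abs_of_pos this,
    abs_of_nonneg (by positivity)]
  field_simp

theorem norm_radialField_barrierCoeff_le {ε α : ℝ} (hε : 0 ≤ ε) (hα : 0 ≤ α) (u : F) :
    ‖radialField (barrierCoeff ε α) u‖ ≤ ε * α := by
  rcases eq_or_ne u 0 with rfl | hu
  · simp [radialField]; positivity
  rw [norm_radialField_barrierCoeff hε hα hu]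
  exact mul_le_of_le_one_right (by positivity) (exp_le_one_iff.2 (by nlinarith [norm_nonneg u]))

theorem inner_radialField_barrierCoeff_neg {ε α R : ℝ} (hε : 0 < ε) (hα : 0 < α) {u : F}
    (hu : ‖u‖ = R) (hR : 0 < R) : ⟪radialField (barrierCoeff ε α) u, R⁻¹ • u⟫ < 0 := by
  rw [radialField, real_inner_smul_left, real_inner_smul_right, real_inner_self_eq_norm_sq, hu,
    barrierCoeff]
  have : 0 < ε * α * exp (-(α * R)) := by positivity
  field_simp
  linarith

theorem norm_add_radialField_barrierCoeff_mem_Icc {ε α : ℝ} (hε : 0 ≤ ε) (hα : 0 ≤ α) {c : F}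
    (hεα : ε * α ≤ ‖c‖ / 2) (u : F) :
    ‖c + radialField (barrierCoeff ε α) u‖ ∈ Icc (‖c‖ / 2) (3 * ‖c‖ / 2) := by
  have := (norm_radialField_barrierCoeff_le hε hα u).trans hεα
  exact ⟨by linarith [norm_sub_le_norm_add c (radialField (barrierCoeff ε α) u)],
    by linarith [norm_add_le c (radialField (barrierCoeff ε α) u)]⟩

theorem add_radialField_barrierCoeff_ne_zero {ε α : ℝ} (hε : 0 ≤ ε) (hα : 0 ≤ α) {c : F}
    (hc : c ≠ 0) (hεα : ε * α ≤ ‖c‖ / 2) (u : F) : c + radialField (barrierCoeff ε α) u ≠ 0 :=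
  norm_pos_iff.1 ((half_pos (norm_pos_iff.2 hc)).trans_le
    (norm_add_radialField_barrierCoeff_mem_Icc hε hα hεα u).1)

variable [CompleteSpace F]

theorem hasGradientAt_barrier (x₀ : F) (ε α R : ℝ) {x : F} (hx : x ≠ x₀) :
    HasGradientAt (barrier x₀ ε α R) (radialField (barrierCoeff ε α) (x - x₀)) x := by
  have hφ : HasDerivAt (fun t ↦ ε * (exp (-(α * t)) - exp (-(α * R))))
      (-(ε * α * exp (-(α * ‖x - x₀‖)))) ‖x - x₀‖ :=
    ((((hasDerivAt_id' _).const_mul α).fun_neg.exp.sub_const _).const_mul ε).congr_deriv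
      (by ring)
  exact hasGradientAt_comp_norm_sub hx hφ

theorem hasGradientAt_barrier_add_inner (x₀ c : F) (ε α R : ℝ) {x : F} (hx : x ≠ x₀) :
    HasGradientAt (fun w ↦ barrier x₀ ε α R w + ⟪c, w⟫)
      (c + radialField (barrierCoeff ε α) (x - x₀)) x := by
  rw [hasGradientAt_iff_hasFDerivAt]
  refine ((hasGradientAt_barrier x₀ ε α R hx).hasFDerivAt.add
    (innerSL ℝ c).hasFDerivAt).congr_fderiv ?_
  ext w
  simp [add_comm]

theorem hasGradientAt_energy {b p : ℝ} (hp : p ≠ 0) {z : F} (hz : z ≠ 0) :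
    HasGradientAt (fun w : F ↦ b * ‖w‖ + ‖w‖ ^ p / p) (radialField (energyCoeff b p) z) z := by
  have hφ : HasDerivAt (fun t ↦ b * t + t ^ p / p) (b + ‖z‖ ^ (p - 1)) ‖z - 0‖ := by
    rw [sub_zero]
    exact (((hasDerivAt_id' _).const_mul b).add ((hasDerivAt_rpow_const
      (Or.inl (norm_ne_zero_iff.2 hz))).div_const p)).congr_deriv (by field_simp)
  simpa [radialField, energyCoeff] using hasGradientAt_comp_norm_sub hz hφ

end RadialProfiles
theorem diverg_energy_barrier_nonneg {n : ℕ} {b p ε α R μ M : ℝ}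
    {c xs x : EuclideanSpace ℝ (Fin n)} (hp : p ≠ 0) (hε : 0 ≤ ε) (hα : 0 ≤ α) (hc : c ≠ 0)
    (hεα : ε * α ≤ ‖c‖ / 2) (hμ : 0 ≤ μ)
    (hbounds : ∀ ρ ∈ Icc (‖c‖ / 2) (3 * ‖c‖ / 2), μ ≤ energyCoeff b p ρ ∧
      μ ≤ (p - 1) * ρ ^ (p - 2) ∧ (n - 1) * energyCoeff b p ρ + (p - 1) * ρ ^ (p - 2) ≤ M)
    (hαM : 2 * M ≤ α * (R * μ)) (hx : x ≠ xs) (hxR : R / 2 ≤ ‖x - xs‖) :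
    0 ≤ diverg (fun y ↦ gradient (fun z : EuclideanSpace ℝ (Fin n) ↦ b * ‖z‖ + ‖z‖ ^ p / p)
      (gradient (fun w ↦ barrier xs ε α R w + ⟪c, w⟫) y)) x := by
  have hz := add_radialField_barrierCoeff_ne_zero hε hα hc hεα
  set ρ := ‖c + radialField (barrierCoeff ε α) (x - xs)‖ with hρ
  obtain ⟨hκ, he, hM⟩ := hbounds ρ (norm_add_radialField_barrierCoeff_mem_Icc hε hα hεα _)
  have hr : 0 < ‖x - xs‖ := norm_pos_iff.2 (sub_ne_zero.2 hx)
  have hV : (fun y ↦ gradient (fun z : EuclideanSpace ℝ (Fin n) ↦ b * ‖z‖ + ‖z‖ ^ p / p)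
      (gradient (fun w ↦ barrier xs ε α R w + ⟪c, w⟫) y)) =ᶠ[𝓝 x]
      fun y ↦ radialField (energyCoeff b p) (c + radialField (barrierCoeff ε α) (y - xs)) := by
    filter_upwards [isOpen_compl_singleton.mem_nhds hx] with y hy
    rw [(hasGradientAt_barrier_add_inner xs c ε α R hy).gradient,
      (hasGradientAt_energy hp (hz _)).gradient]
  rw [diverg_radialField_comp_eq hx (hz _)
    (hasDerivAt_energyCoeff b p (norm_pos_iff.2 (hz _))) (hasDerivAt_barrierCoeff ε α hr.ne') hV]
  refine radialDiverg_nonneg_of_bounds (by positivity) hα hr (norm_pos_iff.2 (hz _)) rfl rfl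
    ((abs_real_inner_le_norm _ _).trans_eq (mul_comm _ _)) hμ hκ he hM ?_
  nlinarith [mul_le_mul_of_nonneg_left hxR (mul_nonneg hα hμ)]

theorem stmt_6_general {n : ℕ}
    (b p : ℝ) (hb : 0 < b) (hp : 1 < p)
    (c : EuclideanSpace ℝ (Fin n)) (hc : c ≠ 0) (m : ℝ) (hm : 0 < m)
    (xs : EuclideanSpace ℝ (Fin n)) (R : ℝ) (hR : 0 < R) :
    ∃ h : EuclideanSpace ℝ (Fin n) → ℝ,
      ContDiffOn ℝ (⊤ : ℕ∞) h {xs}ᶜ ∧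
      (∀ y, dist y xs = R → h y = 0) ∧
      (∀ x, R / 2 ≤ dist x xs → dist x xs ≤ R → 0 ≤ h x ∧ h x ≤ m) ∧
      (∀ y, dist y xs = R → ⟪gradient h y, R⁻¹ • (y - xs)⟫ < 0) ∧
      (∀ x ∈ ball xs R \ closedBall xs (R / 2), ‖gradient h x‖ ≤ ‖c‖ / 2) ∧
      (∀ x ∈ ball xs R \ closedBall xs (R / 2),
        gradient (fun y => h y + ⟪c, y⟫) x ≠ 0 ∧
        0 ≤ diverg (fun y =>
            gradient (fun z : EuclideanSpace ℝ (Fin n) => b * ‖z‖ + ‖z‖ ^ p / p)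
              (gradient (fun w => h w + ⟪c, w⟫) y)) x) := by
  obtain ⟨μ, hμ, M, hbounds⟩ := exists_energyCoeff_bounds b p (n - 1) hb.le hp
    (ρ₂ := 3 * ‖c‖ / 2) (half_pos (norm_pos_iff.2 hc))
  set α := max 1 (2 * M / (R * μ))
  set ε := min m (‖c‖ / 2 / α)
  have hα : 0 < α := zero_lt_one.trans_le (le_max_left _ _)
  have hε : 0 < ε := lt_min hm (by positivity)
  have hαM : 2 * M ≤ α * (R * μ) := (div_le_iff₀ (by positivity)).1 (le_max_right _ _)
  have hεα : ε * α ≤ ‖c‖ / 2 := (le_div_iff₀ hα).1 (min_le_right _ _)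
  have hne {x} (hx : R / 2 ≤ ‖x - xs‖) : x ≠ xs := by rintro rfl; simp at hx; linarith
  have hann {x} (hx : x ∈ ball xs R \ closedBall xs (R / 2)) : R / 2 ≤ ‖x - xs‖ := by
    simpa [dist_eq_norm] using (not_le.1 hx.2).le
  refine ⟨barrier xs ε α R, contDiffOn_barrier xs ε α R,
    fun y hy ↦ barrier_eq_zero (by rwa [← dist_eq_norm]),
    fun x _ hx ↦ ⟨barrier_nonneg hε.le hα.le (by rwa [← dist_eq_norm]),
      (barrier_le hε.le hα.le).trans (min_le_left _ _)⟩, fun y hy ↦ ?_, fun x hx ↦ ?_,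
    fun x hx ↦ ⟨?_, diverg_energy_barrier_nonneg (by positivity) hε.le hα.le hc hεα hμ.le hbounds
      hαM (hne (hann hx)) (hann hx)⟩⟩
  · rw [dist_eq_norm] at hy
    rw [(hasGradientAt_barrier xs ε α R (hne (by linarith))).gradient]
    exact inner_radialField_barrierCoeff_neg hε hα hy hR
  · rw [(hasGradientAt_barrier xs ε α R (hne (hann hx))).gradient]
    exact (norm_radialField_barrierCoeff_le hε.le hα.le _).trans hεα
  · rw [(hasGradientAt_barrier_add_inner xs c ε α R (hne (hann hx))).gradient]
    exact add_radialField_barrierCoeff_ne_zero hε.le hα.le hc hεα _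

/-- **Construction of classical barrier subsolutions.** On the open annulus
`E_R(x*) = B_R(x*) ∖ closedBall_{R/2}(x*)` there is a smooth function `h` vanishing on the outer
sphere, between `0` and `m`, with strictly negative outer normal derivative on the outer sphere,
small gradient, and such that `v = h + ⟨c, ·⟩` is a classical subsolution of `L_{b,p} v = 0`,
i.e. `div(∇E(∇v)) ≥ 0` with `E(z) = b|z| + |z|^p/p`. -/
theorem stmt_6 {n : ℕ} (hn : 1 ≤ n)
    (b p : ℝ) (hb : 0 < b) (hp : 1 < p)
    (c : EuclideanSpace ℝ (Fin n)) (hc : c ≠ 0) (m : ℝ) (hm : 0 < m)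
    (xs : EuclideanSpace ℝ (Fin n)) (R : ℝ) (hR : 0 < R) :
    ∃ h : EuclideanSpace ℝ (Fin n) → ℝ,
      ContDiffOn ℝ (⊤ : ℕ∞) h {xs}ᶜ ∧
      (∀ y, dist y xs = R → h y = 0) ∧
      (∀ x, R / 2 ≤ dist x xs → dist x xs ≤ R → 0 ≤ h x ∧ h x ≤ m) ∧
      (∀ y, dist y xs = R → ⟪gradient h y, R⁻¹ • (y - xs)⟫ < 0) ∧
      (∀ x ∈ ball xs R \ closedBall xs (R / 2), ‖gradient h x‖ ≤ ‖c‖ / 2) ∧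
      (∀ x ∈ ball xs R \ closedBall xs (R / 2),
        gradient (fun y => h y + ⟪c, y⟫) x ≠ 0 ∧
        0 ≤ diverg (fun y =>
            gradient (fun z : EuclideanSpace ℝ (Fin n) => b * ‖z‖ + ‖z‖ ^ p / p)
              (gradient (fun w => h w + ⟪c, w⟫) y)) x) :=
  stmt_6_general b p hb hp c hc m hm xs R hR
end
end

section
/- Let n ≥ 1 and let u : ℝⁿ → ℝ be a convex function. Let F := {x ∈ ℝⁿ : u(x) ≤ u(y) for all y ∈ ℝⁿ} be its set of minimum points, and assume: (i) F ≠ ∅ and F ≠ ℝⁿ; (ii) the minimum value of u is 0; (iii) u is affine on each connected component of ℝⁿ ∖ F. Then there exist a unit vector ν ∈ ℝⁿ and β ∈ ℝ such that, setting s(x) := ⟨ν, x⟩ − β, exactly one of the following holds: (a) there exists t₁ > 0 with u(x) = max(t₁·s(x), 0) for all x ∈ ℝⁿ; (b) there exist t₁, t₂ > 0 with u(x) = max(t₁·s(x), −t₂·s(x)) for all x ∈ ℝⁿ; (c) there exist t₁, t₂, l₀ > 0 with u(x) = max(t₁·s(x), 0, −t₂·(s(x) + l₀)) for all x ∈ ℝⁿ.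 -/
open MeasureTheory Set Metric Filter
open scoped RealInnerProductSpace Topology ENNReal

noncomputable section

/-!
If a convex `u` agrees with an affine `ℓ` on the (open) component `C` of `{u > 0}` through a
point, then `ℓ ≤ u` everywhere (a local minimum of the convex `u - ℓ` is global). Hence the
half-space `{ℓ > 0}` is a connected subset of `{u > 0}` meeting `C`, so `u = ℓ` there, and by
continuity on `{ℓ ≥ 0}`. For one component this gives `u = t₁ s` on `{s ≥ 0}` with `s` the
normalised `ℓ`, and `u = 0` on `{s = 0}`. Either `u` vanishes on `{s < 0}`, which is form (a),
or some other component lies in `{s < 0}`; its affine function is nonpositive on the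
hyperplane `{s = 0}`, so it depends on `s` only and is `-t₂ (s + l₀)` with `l₀ ≥ 0`. Convexity
makes `u` vanish on the slab `-l₀ ≤ s ≤ 0`, giving (b) if `l₀ = 0` and (c) otherwise. The three
forms disagree at a suitable negative value of `s`, so only one of them can hold.
-/

theorem ConvexOn.le_of_eventuallyEq {E : Type*} [AddCommGroup E] [TopologicalSpace E]
    [Module ℝ E] [IsTopologicalAddGroup E] [ContinuousSMul ℝ E] {u ℓ : E → ℝ} {x : E}
    (hu : ConvexOn ℝ univ u) (hℓ : ConcaveOn ℝ univ ℓ) (h : u =ᶠ[𝓝 x] ℓ) (y : E) : ℓ y ≤ u y := by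
  have hmin : IsLocalMin (u - ℓ) x := by
    filter_upwards [h] with z hz
    simp [hz, h.eq_of_nhds]
  have := IsMinOn.of_isLocalMin_of_convex_univ hmin (hu.sub hℓ) y
  simp only [Pi.sub_apply, h.eq_of_nhds, sub_self, sub_nonneg] at this
  exact this

theorem ConvexOn.eq_zero_of_eq_zero_at_add_smul {E : Type*} [AddCommGroup E] [Module ℝ E]
    {u : E → ℝ} (hu : ConvexOn ℝ univ u) (hnonneg : ∀ y, 0 ≤ u y) {y v : E} {a b : ℝ}
    (ha : a ≤ 0) (hb : 0 ≤ b)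
    (hua : u (y + a • v) = 0) (hub : u (y + b • v) = 0) : u y = 0 := by
  have hy : y ∈ segment ℝ (y + a • v) (y + b • v) := by
    rw [mem_segment_iff_sameRay, sub_add_cancel_left, add_sub_cancel_left, ← neg_smul]
    exact (SameRay.sameRay_nonneg_smul_left v (neg_nonneg.2 ha)).nonneg_smul_right hb
  have := hu.le_on_segment (mem_univ _) (mem_univ _) hy
  rw [hua, hub, max_self] at this
  exact le_antisymm this (hnonneg y)

theorem le_and_eqOn_of_eqOn_connectedComponentIn {E : Type*} [NormedAddCommGroup E]
    [NormedSpace ℝ E] {u ℓ : E → ℝ} {x : E} (hu : ConvexOn ℝ univ u) (hu' : Continuous u)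
    (hℓ : ConcaveOn ℝ univ ℓ) (hℓ' : Continuous ℓ) (hx : 0 < u x)
    (h : EqOn u ℓ (connectedComponentIn {y | 0 < u y} x)) :
    (∀ y, ℓ y ≤ u y) ∧ EqOn u ℓ {y | 0 ≤ ℓ y} := by
  have hxC := mem_connectedComponentIn (F := {y | 0 < u y}) hx
  have hle : ∀ y, ℓ y ≤ u y := hu.le_of_eventuallyEq hℓ <| eventuallyEq_of_mem
    ((isOpen_lt continuous_const hu').connectedComponentIn.mem_nhds hxC) h
  have hpos : EqOn u ℓ {y | 0 < ℓ y} := by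
    refine h.mono <| IsPreconnected.subset_connectedComponentIn ?_ ?_ ?_
    · simpa using (hℓ.convex_gt 0).isPreconnected
    · simpa [← h hxC] using hx
    · exact fun y hy => lt_of_lt_of_le hy (hle y)
  refine ⟨hle, fun y (hy : 0 ≤ ℓ y) => ?_⟩
  rcases hy.lt_or_eq with hy | hy
  · exact hpos hy
  -- approach `y` from inside `{ℓ > 0}` along the segment towards `x`
  set p : ℝ → E := fun t => (1 - t) • y + t • x
  have hseg : EqOn (u ∘ p) (ℓ ∘ p) (Ioc 0 1) := fun t ⟨ht₀, ht₁⟩ => hpos <| by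
    have := hℓ.2 (mem_univ y) (mem_univ x) (by linarith : 0 ≤ 1 - t) ht₀.le (by ring)
    simp only [smul_eq_mul, ← hy, mul_zero, zero_add, ← h hxC] at this
    exact lt_of_lt_of_le (mul_pos ht₀ hx) this
  have hp : Continuous p := by fun_prop
  have := hseg.of_subset_closure (hu'.comp hp).continuousOn (hℓ'.comp hp).continuousOn
    Ioc_subset_Icc_self (closure_Ioc zero_ne_one).superset (left_mem_Icc.2 zero_le_one)
  simpa [p] using this

section Profiles

variable {X : Type*} {u s : X → ℝ}

-- the forms (a), (b), (c) of the classification, in the coordinate `s`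
def IsRampProfile (u s : X → ℝ) : Prop :=
  ∃ t₁ : ℝ, 0 < t₁ ∧ ∀ x, u x = max (t₁ * s x) 0

def IsVeeProfile (u s : X → ℝ) : Prop :=
  ∃ t₁ t₂ : ℝ, 0 < t₁ ∧ 0 < t₂ ∧ ∀ x, u x = max (t₁ * s x) (-(t₂ * s x))

def IsTroughProfile (u s : X → ℝ) : Prop :=
  ∃ t₁ t₂ l₀ : ℝ, 0 < t₁ ∧ 0 < t₂ ∧ 0 < l₀ ∧
    ∀ x, u x = max (t₁ * s x) (max 0 (-(t₂ * (s x + l₀))))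

theorem IsRampProfile.not_isVeeProfile (hs : Function.Surjective s) (hA : IsRampProfile u s) :
    ¬ IsVeeProfile u s := by
  obtain ⟨t₁, ht₁, hA⟩ := hA
  rintro ⟨t₁', t₂', -, ht₂', hB⟩
  obtain ⟨x, hx⟩ := hs (-1)
  have h₀ : u x = 0 := by rw [hA, hx]; exact max_eq_right (by linarith)
  have h₁ : t₂' ≤ u x := by rw [hB, hx]; exact le_max_of_le_right (by linarith)
  linarith

theorem IsRampProfile.not_isTroughProfile (hs : Function.Surjective s)
    (hA : IsRampProfile u s) : ¬ IsTroughProfile u s := by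
  obtain ⟨t₁, ht₁, hA⟩ := hA
  rintro ⟨t₁', t₂', l₀, -, ht₂', hl₀, hC⟩
  obtain ⟨x, hx⟩ := hs (-(l₀ + 1))
  have h₀ : u x = 0 := by rw [hA, hx]; exact max_eq_right (by nlinarith)
  have h₁ : t₂' ≤ u x := by
    rw [hC, hx]; exact le_max_of_le_right (le_max_of_le_right (by linarith))
  linarith

theorem IsVeeProfile.not_isTroughProfile (hs : Function.Surjective s)
    (hB : IsVeeProfile u s) : ¬ IsTroughProfile u s := by
  obtain ⟨t₁, t₂, -, ht₂, hB⟩ := hB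
  rintro ⟨t₁', t₂', l₀, ht₁', ht₂', hl₀, hC⟩
  obtain ⟨x, hx⟩ := hs (-(l₀ / 2))
  have h₀ : u x = 0 := by
    rw [hC, hx, max_eq_left (b := -(t₂' * _)) (by nlinarith)]
    exact max_eq_right (by nlinarith)
  have h₁ : t₂ * (l₀ / 2) ≤ u x := by rw [hB, hx]; exact le_max_of_le_right (by linarith)
  nlinarith

theorem exactlyOne_profile_of_or (hs : Function.Surjective s)
    (h : IsRampProfile u s ∨ IsVeeProfile u s ∨ IsTroughProfile u s) :
    (IsRampProfile u s ∧ ¬ IsVeeProfile u s ∧ ¬ IsTroughProfile u s) ∨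
      (¬ IsRampProfile u s ∧ IsVeeProfile u s ∧ ¬ IsTroughProfile u s) ∨
      (¬ IsRampProfile u s ∧ ¬ IsVeeProfile u s ∧ IsTroughProfile u s) := by
  rcases h with hA | hB | hC
  · exact Or.inl ⟨hA, hA.not_isVeeProfile hs, hA.not_isTroughProfile hs⟩
  · exact Or.inr (Or.inl ⟨fun hA => hA.not_isVeeProfile hs hB, hB, hB.not_isTroughProfile hs⟩)
  · exact Or.inr (Or.inr ⟨fun hA => hA.not_isTroughProfile hs hC,
      fun hB => hB.not_isTroughProfile hs hC, hC⟩)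

end Profiles

theorem isVeeProfile_or_isTroughProfile_of_pieces {E : Type*} [AddCommGroup E] [Module ℝ E]
    {u s : E → ℝ} {v : E} (hu : ConvexOn ℝ univ u) (hnonneg : ∀ y, 0 ≤ u y)
    (hs : ∀ y (t : ℝ), s (y + t • v) = s y + t) {t₁ t₂ l₀ : ℝ} (ht₁ : 0 < t₁) (ht₂ : 0 < t₂)
    (hl₀ : 0 ≤ l₀) (hup : ∀ y, t₁ * s y ≤ u y) (hup' : ∀ y, 0 ≤ t₁ * s y → u y = t₁ * s y)
    (hlow : ∀ y, -(t₂ * (s y + l₀)) ≤ u y)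
    (hlow' : ∀ y, 0 ≤ -(t₂ * (s y + l₀)) → u y = -(t₂ * (s y + l₀))) :
    IsVeeProfile u s ∨ IsTroughProfile u s := by
  have hslab : ∀ y, -l₀ ≤ s y → s y ≤ 0 → u y = 0 := fun y h₁ h₂ =>
    hu.eq_zero_of_eq_zero_at_add_smul hnonneg (v := v) (a := -l₀ - s y) (b := -s y)
      (by linarith) (by linarith)
      (by rw [hlow' _ (by rw [hs]; simp), hs]; ring)
      (by rw [hup' _ (by rw [hs]; simp), hs]; ring)
  have hform : ∀ y, u y = max (t₁ * s y) (max 0 (-(t₂ * (s y + l₀)))) := fun y => by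
    refine le_antisymm ?_ (max_le (hup y) (max_le (hnonneg y) (hlow y)))
    rcases le_or_gt 0 (s y) with h | h
    · rw [hup' y (by positivity)]; exact le_max_left _ _
    rcases le_or_gt (s y) (-l₀) with h' | h'
    · rw [hlow' y (by nlinarith)]; exact le_max_of_le_right (le_max_right _ _)
    · rw [hslab y h'.le h.le]; exact le_max_of_le_right (le_max_left _ _)
  rcases hl₀.eq_or_lt with rfl | hl₀
  · refine Or.inl ⟨t₁, t₂, ht₁, ht₂, fun y => ?_⟩
    have : 0 ≤ max (t₁ * s y) (-(t₂ * s y)) := by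
      rcases le_total 0 (s y) with h | h
      · exact le_max_of_le_left (by positivity)
      · exact le_max_of_le_right (by nlinarith)
    rw [hform, add_zero, max_left_comm, max_eq_right this]
  · exact Or.inr ⟨t₁, t₂, l₀, ht₁, ht₂, hl₀, hform⟩

section InnerProduct

variable {E : Type*} [NormedAddCommGroup E] [InnerProductSpace ℝ E]

theorem exists_norm_eq_one_inner_add_eq {a : E} (ha : a ≠ 0) (γ : ℝ) :
    ∃ ν β, ‖ν‖ = 1 ∧ ∀ y, ⟪a, y⟫ + γ = ‖a‖ * (⟪ν, y⟫ - β) :=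
  ⟨‖a‖⁻¹ • a, -γ / ‖a‖, norm_smul_inv_norm ha, fun y => by
    rw [real_inner_smul_left]; field_simp; ring⟩

theorem exists_inner_add_eq_of_nonpos_on_hyperplane {ν b : E} {β δ : ℝ} (hν : ‖ν‖ = 1)
    (h : ∀ y, ⟪ν, y⟫ = β → ⟪b, y⟫ + δ ≤ 0) :
    ∃ c d, d ≤ 0 ∧ ∀ y, ⟪b, y⟫ + δ = c * (⟪ν, y⟫ - β) + d := by
  set c := ⟪ν, b⟫
  set w := b - c • ν
  have hνw : ⟪ν, w⟫ = 0 := by simp [w, inner_sub_right, real_inner_smul_right, hν, c]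
  have hbw : ⟪b, w⟫ = ‖w‖ ^ 2 := by
    rw [← real_inner_self_eq_norm_sq, show b = w + c • ν by simp [w], inner_add_left,
      real_inner_smul_left, real_inner_comm, hνw, mul_zero, add_zero]
  -- `b` is bounded above on the line `β • ν + t • w` inside the hyperplane, so `w = 0`
  have hline : ∀ t : ℝ, t * ‖w‖ ^ 2 + (c * β + δ) ≤ 0 := fun t => by
    have := h (β • ν + t • w) (by simp [inner_add_right, real_inner_smul_right, hν, hνw])
    rw [inner_add_right, real_inner_smul_right, real_inner_smul_right, hbw, real_inner_comm]
      at this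
    linarith
  have hw : w = 0 := by
    by_contra hw
    have hpos : 0 < ‖w‖ ^ 2 := by positivity
    have := hline ((1 - (c * β + δ)) / ‖w‖ ^ 2)
    rw [div_mul_cancel₀ _ hpos.ne'] at this
    linarith
  refine ⟨c, c * β + δ, by simpa using hline 0, fun y => ?_⟩
  rw [show b = c • ν by simpa [w, sub_eq_zero] using hw, real_inner_smul_left]
  ring

theorem le_and_eqOn_of_eqOn_inner_add {u : E → ℝ} {x a : E} {γ : ℝ} (hu : ConvexOn ℝ univ u)
    (hu' : Continuous u) (hx : 0 < u x)
    (h : ∀ y ∈ connectedComponentIn {y | 0 < u y} x, u y = ⟪a, y⟫ + γ) :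
    (∀ y, ⟪a, y⟫ + γ ≤ u y) ∧ ∀ y, 0 ≤ ⟪a, y⟫ + γ → u y = ⟪a, y⟫ + γ :=
  le_and_eqOn_of_eqOn_connectedComponentIn hu hu'
    (((innerₛₗ ℝ a).concaveOn convex_univ).add (concaveOn_const γ convex_univ)) (by fun_prop)
    hx h

theorem exists_lower_affine_piece {u : E → ℝ} (hu : ConvexOn ℝ univ u) (hu' : Continuous u)
    {ν : E} {β : ℝ} (hν : ‖ν‖ = 1) (hzero : ∀ y, ⟪ν, y⟫ = β → u y = 0) {x b : E} {δ : ℝ}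
    (hsx : ⟪ν, x⟫ - β < 0) (hx : 0 < u x)
    (h : ∀ y ∈ connectedComponentIn {y | 0 < u y} x, u y = ⟪b, y⟫ + δ) :
    ∃ t₂ l₀ : ℝ, 0 < t₂ ∧ 0 ≤ l₀ ∧ (∀ y, -(t₂ * (⟪ν, y⟫ - β + l₀)) ≤ u y) ∧
      ∀ y, 0 ≤ -(t₂ * (⟪ν, y⟫ - β + l₀)) → u y = -(t₂ * (⟪ν, y⟫ - β + l₀)) := by
  obtain ⟨hle, heq⟩ := le_and_eqOn_of_eqOn_inner_add hu hu' hx h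
  obtain ⟨c, d, hd, hcd⟩ := exists_inner_add_eq_of_nonpos_on_hyperplane hν
    fun y hy => (hle y).trans (hzero y hy).le
  have hc : c < 0 := by
    have : 0 < c * (⟪ν, x⟫ - β) + d := by
      rw [← hcd, ← h x (mem_connectedComponentIn hx)]; exact hx
    nlinarith
  have hform : ∀ y, ⟪b, y⟫ + δ = -(-c * (⟪ν, y⟫ - β + d / c)) := fun y => by
    rw [hcd, neg_mul, neg_neg, mul_add, mul_div_cancel₀ _ hc.ne]
  refine ⟨-c, d / c, by linarith, div_nonneg_of_nonpos hd hc.le, fun y => ?_, fun y hy => ?_⟩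
  · rw [← hform]; exact hle y
  · rw [← hform] at hy ⊢; exact heq y hy

theorem exists_isRampProfile_or_isVeeProfile_or_isTroughProfile {u : E → ℝ}
    (hu : ConvexOn ℝ univ u) (hu' : Continuous u)
    (hnonneg : ∀ y, 0 ≤ u y) (hzero : ∃ z, u z = 0) (hpos : ∃ x, 0 < u x)
    (haff : ∀ x, 0 < u x → ∃ (a : E) (γ : ℝ),
      ∀ y ∈ connectedComponentIn {y | 0 < u y} x, u y = ⟪a, y⟫ + γ) :
    ∃ (ν : E) (β : ℝ), ‖ν‖ = 1 ∧
      (IsRampProfile u (fun y => ⟪ν, y⟫ - β) ∨ IsVeeProfile u (fun y => ⟪ν, y⟫ - β) ∨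
        IsTroughProfile u (fun y => ⟪ν, y⟫ - β)) := by
  obtain ⟨x₀, hx₀⟩ := hpos
  obtain ⟨a, γ, ha⟩ := haff x₀ hx₀
  obtain ⟨hle, heq⟩ := le_and_eqOn_of_eqOn_inner_add hu hu' hx₀ ha
  have ha₀ : a ≠ 0 := by
    rintro rfl
    obtain ⟨z, hz⟩ := hzero
    have hγ : u x₀ = γ := by simpa using ha x₀ (mem_connectedComponentIn hx₀)
    have : γ ≤ u z := by simpa using hle z
    linarith
  obtain ⟨ν, β, hν, haν⟩ := exists_norm_eq_one_inner_add_eq ha₀ γ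
  simp only [haν] at hle heq
  have ht₁ : 0 < ‖a‖ := norm_pos_iff.2 ha₀
  refine ⟨ν, β, hν, ?_⟩
  by_cases hlower : ∃ x₁, ⟪ν, x₁⟫ - β < 0 ∧ 0 < u x₁
  · obtain ⟨x₁, hsx₁, hx₁⟩ := hlower
    obtain ⟨b, δ, hb⟩ := haff x₁ hx₁
    obtain ⟨t₂, l₀, ht₂, hl₀, hlow, hlow'⟩ := exists_lower_affine_piece hu hu' hν
      (fun y hy => by simpa [hy] using heq y) hsx₁ hx₁ hb
    refine Or.inr (isVeeProfile_or_isTroughProfile_of_pieces hu hnonneg (v := ν)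
      (fun y t => ?_) ht₁ ht₂ hl₀ hle heq hlow hlow')
    simp only [inner_add_right, real_inner_smul_right, real_inner_self_eq_norm_sq, hν]
    ring
  · push Not at hlower
    refine Or.inl ⟨‖a‖, ht₁, fun y => le_antisymm ?_ (max_le (hle y) (hnonneg y))⟩
    rcases le_or_gt 0 (⟪ν, y⟫ - β) with h | h
    · rw [heq y (by positivity)]; exact le_max_left _ _
    · rw [le_antisymm (hlower y h) (hnonneg y)]; exact le_max_right _ _

end InnerProduct

theorem stmt_7_general {n : ℕ}
    (u : EuclideanSpace ℝ (Fin n) → ℝ)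
    (hconv : ConvexOn ℝ Set.univ u)
    (F : Set (EuclideanSpace ℝ (Fin n)))
    (hF : F = {x | ∀ y, u x ≤ u y})
    (hFne : F.Nonempty) (hFproper : F ≠ Set.univ)
    (hmin : ∀ x ∈ F, u x = 0)
    (haffine : ∀ x ∈ Fᶜ, ∃ (a : EuclideanSpace ℝ (Fin n)) (γ : ℝ),
      ∀ y ∈ connectedComponentIn Fᶜ x, u y = ⟪a, y⟫ + γ) :
    ∃ (ν : EuclideanSpace ℝ (Fin n)) (β : ℝ), ‖ν‖ = 1 ∧
      (let s : EuclideanSpace ℝ (Fin n) → ℝ := fun x => ⟪ν, x⟫ - β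
       let A : Prop := ∃ t₁ : ℝ, 0 < t₁ ∧ ∀ x, u x = max (t₁ * s x) 0
       let B : Prop := ∃ t₁ t₂ : ℝ, 0 < t₁ ∧ 0 < t₂ ∧
         ∀ x, u x = max (t₁ * s x) (-(t₂ * s x))
       let C : Prop := ∃ t₁ t₂ l₀ : ℝ, 0 < t₁ ∧ 0 < t₂ ∧ 0 < l₀ ∧
         ∀ x, u x = max (t₁ * s x) (max 0 (-(t₂ * (s x + l₀))))
       (A ∧ ¬B ∧ ¬C) ∨ (¬A ∧ B ∧ ¬C) ∨ (¬A ∧ ¬B ∧ C)) := by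
  obtain ⟨z, hz⟩ := hFne
  have hz₀ := hmin z hz
  rw [hF] at hz hFproper haffine
  have hnonneg : ∀ y, 0 ≤ u y := fun y => hz₀ ▸ hz y
  have hFc : {x | ∀ y, u x ≤ u y}ᶜ = {y | 0 < u y} := by
    ext x
    simp only [mem_compl_iff, mem_ofPred_eq, not_forall, not_le]
    exact ⟨fun ⟨y, hy⟩ => (hnonneg y).trans_lt hy, fun hx => ⟨z, hz₀ ▸ hx⟩⟩
  rw [hFc] at haffine
  obtain ⟨x, hx⟩ := (ne_univ_iff_exists_notMem _).1 hFproper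
  obtain ⟨ν, β, hν, h⟩ := exists_isRampProfile_or_isVeeProfile_or_isTroughProfile hconv
    (continuousOn_univ.1 (hconv.continuousOn isOpen_univ)) hnonneg ⟨z, hz₀⟩
    ⟨x, (hFc ▸ hx : x ∈ {y | 0 < u y})⟩ haffine
  refine ⟨ν, β, hν, exactlyOne_profile_of_or (fun r => ⟨(r + β) • ν, ?_⟩) h⟩
  simp [real_inner_smul_right, hν]

/-- **Classification of convex functions affine off their facet.** If a convex `u : ℝⁿ → ℝ`
has a nonempty proper set `F` of minimum points, attains minimum value `0`, and is affine on
each connected component of `ℝⁿ ∖ F`, then up to a rotation and shift (a unit vector `ν` and a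
scalar `β`, with `s(x) = ⟨ν, x⟩ − β`) exactly one of three piecewise-linear forms holds. -/
theorem stmt_7 {n : ℕ} (hn : 1 ≤ n)
    (u : EuclideanSpace ℝ (Fin n) → ℝ)
    (hconv : ConvexOn ℝ Set.univ u)
    (F : Set (EuclideanSpace ℝ (Fin n)))
    (hF : F = {x | ∀ y, u x ≤ u y})
    (hFne : F.Nonempty) (hFproper : F ≠ Set.univ)
    (hmin : ∀ x ∈ F, u x = 0)
    (haffine : ∀ x ∈ Fᶜ, ∃ (a : EuclideanSpace ℝ (Fin n)) (γ : ℝ),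
      ∀ y ∈ connectedComponentIn Fᶜ x, u y = ⟪a, y⟫ + γ) :
    ∃ (ν : EuclideanSpace ℝ (Fin n)) (β : ℝ), ‖ν‖ = 1 ∧
      (let s : EuclideanSpace ℝ (Fin n) → ℝ := fun x => ⟪ν, x⟫ - β
       let A : Prop := ∃ t₁ : ℝ, 0 < t₁ ∧ ∀ x, u x = max (t₁ * s x) 0
       let B : Prop := ∃ t₁ t₂ : ℝ, 0 < t₁ ∧ 0 < t₂ ∧
         ∀ x, u x = max (t₁ * s x) (-(t₂ * s x))
       let C : Prop := ∃ t₁ t₂ l₀ : ℝ, 0 < t₁ ∧ 0 < t₂ ∧ 0 < l₀ ∧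
         ∀ x, u x = max (t₁ * s x) (max 0 (-(t₂ * (s x + l₀))))
       (A ∧ ¬B ∧ ¬C) ∨ (¬A ∧ B ∧ ¬C) ∨ (¬A ∧ ¬B ∧ C)) :=
  stmt_7_general u hconv F hF hFne hFproper hmin haffine
end
end

section
/- Let n ≥ 1 and let U ⊆ ℝⁿ be a bounded open set. Let Ψ : ℝⁿ → [0,∞) be convex, continuous, twice continuously differentiable on ℝⁿ ∖ {0}, and positively homogeneous of degree 1; let W : ℝⁿ → ℝ be convex and continuously differentiable with ∇W(0) = 0. Let u_N : U → ℝ (N ∈ ℕ) and u : U → ℝ be Lipschitz, let f_N ∈ L^q(U) with n < q ≤ ∞, and assume: (i) for each N, u_N is a weak solution of −div(∇Ψ(∇u_N)) − div(∇W(∇u_N)) = f_N in U, i.e. there is a bounded measurable Z_N : U → ℝⁿ with Z_N(x) ∈ ∂Ψ(∇u_N(x)) for a.e. x ∈ U and ∫_U ⟨Z_N, ∇φ⟩ + ∫_U ⟨∇W(∇u_N), ∇φ⟩ = ∫_U f_N·φ for every smooth compactly supported φ : U → ℝ; (ii) there is M > 0 with |∇u_N(x)| ≤ M for a.e. x ∈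 U and all N; (iii) ∇u_N(x) → ∇u(x) as N → ∞ for a.e. x ∈ U; (iv) f_N → 0 in L^q(U). Then u is a weak solution of −div(∇Ψ(∇u)) − div(∇W(∇u)) = 0 in U, i.e. there exists a bounded measurable Z : U → ℝⁿ with Z(x) ∈ ∂Ψ(∇u(x)) for a.e. x ∈ U and ∫_U ⟨Z, ∇φ⟩ + ∫_U ⟨∇W(∇u), ∇φ⟩ = 0 for every smooth compactly supported φ : U → ℝ. -/
/-!
By positive homogeneity every subgradient of `Ψ` lies in `K = ∂Ψ(0) = {ζ | ⟪ζ, w⟫ ≤ Ψ w ∀ w}`,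
a bounded set, so the fields `Z_N` are uniformly bounded and have a weak cluster point `Z` in `L²`
(Banach–Alaoglu). Membership in `K` is a countable family of half-space constraints, hence survives
weak limits: `Z ∈ ∂Ψ(0)` a.e., which is what is needed where `∇u = 0`. Where `∇u ≠ 0`, `Ψ` is
differentiable near `∇u_N` for large `N`, so `Z_N = ∇Ψ(∇u_N) → ∇Ψ(∇u)` a.e., and a weak limit agrees
with an a.e. limit of bounded functions. The `W`-term passes to the limit by dominated convergence,
and the right-hand side tends to `0` because `q ≥ 1` and `U` has finite measure.
-/

open MeasureTheory Set Metric Filter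
open scoped RealInnerProductSpace Topology ENNReal

noncomputable section

/-- The subdifferential of a function `Ψ : ℝⁿ → ℝ` at a point `v`. -/
def subdiffFn {n : ℕ} (Ψ : EuclideanSpace ℝ (Fin n) → ℝ) (v : EuclideanSpace ℝ (Fin n)) :
    Set (EuclideanSpace ℝ (Fin n)) :=
  {ζ | ∀ w, Ψ v + ⟪ζ, w - v⟫ ≤ Ψ w}

/-- `u` is a weak solution of `−div(∇Ψ(∇u)) − div(∇W(∇u)) = f` in the open set `Ω`. -/
def IsWeakSolutionGen (n : ℕ) (Ψ W : EuclideanSpace ℝ (Fin n) → ℝ)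
    (Ω : Set (EuclideanSpace ℝ (Fin n))) (u f : EuclideanSpace ℝ (Fin n) → ℝ) : Prop :=
  ∀ ω : Set (EuclideanSpace ℝ (Fin n)), IsOpen ω → Bornology.IsBounded ω → closure ω ⊆ Ω →
    ∃ Z : EuclideanSpace ℝ (Fin n) → EuclideanSpace ℝ (Fin n),
      Measurable Z ∧
      (∃ C : ℝ, ∀ᵐ x ∂(volume.restrict ω), ‖Z x‖ ≤ C) ∧
      (∀ᵐ x ∂(volume.restrict ω), Z x ∈ subdiffFn Ψ (gradient u x)) ∧
      ∀ φ : EuclideanSpace ℝ (Fin n) → ℝ, IsTestOn ω φ →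
        (∫ x in ω, ⟪Z x, gradient φ x⟫) +
          ∫ x in ω, ⟪gradient W (gradient u x), gradient φ x⟫
          = ∫ x in ω, f x * φ x

section Subgradient

variable {F : Type*} [NormedAddCommGroup F] [InnerProductSpace ℝ F] [CompleteSpace F]
  {f : F → ℝ}

theorem ConvexOn.add_inner_le_of_hasGradientAt (hf : ConvexOn ℝ univ f) {g v : F}
    (hg : HasGradientAt f g v) (w : F) : f v + ⟪g, w - v⟫ ≤ f w := by
  let ℓ : ℝ →ᵃ[ℝ] F := AffineMap.lineMap v w
  have hline : HasDerivAt (f ∘ ℓ) ⟪g, w - v⟫ 0 := by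
    have hg' : HasFDerivAt f (InnerProductSpace.toDual ℝ F g) (ℓ 0) := by
      simpa [ℓ] using hg.hasFDerivAt
    simpa using hg'.comp_hasDerivAt (0 : ℝ) AffineMap.hasDerivAt_lineMap
  have := (hf.comp_affineMap ℓ).le_slope_of_hasDerivAt (mem_univ 0) (mem_univ 1) zero_lt_one hline
  simp [ℓ, slope_def_field] at this
  linarith

theorem HasGradientAt.eq_of_forall_add_inner_le {g v ζ : F} (hg : HasGradientAt f g v)
    (hζ : ∀ w, f v + ⟪ζ, w - v⟫ ≤ f w) : ζ = g := by
  have hmin : IsLocalMin (fun w => f w - ⟪ζ, w⟫) v :=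
    Eventually.of_forall fun w => by linarith [hζ w, inner_sub_right (𝕜 := ℝ) ζ w v]
  have hderiv : HasFDerivAt (fun w => f w - ⟪ζ, w⟫)
      (InnerProductSpace.toDual ℝ F g - innerSL ℝ ζ) v :=
    hg.hasFDerivAt.sub (innerSL ℝ ζ).hasFDerivAt
  have h0 := congrArg (fun T => T (g - ζ)) (hmin.hasFDerivAt_eq_zero hderiv)
  simp only [sub_apply, InnerProductSpace.toDual_apply_apply, innerSL_apply_apply,
    ← inner_sub_left, zero_apply, inner_self_eq_zero, sub_eq_zero] at h0
  exact h0.symm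

theorem tendsto_gradient_of_forall_add_inner_le {s : Set F} (hs : IsOpen s)
    (hf : ContDiffOn ℝ 1 f s) {ι : Type*} {l : Filter ι} {v : ι → F} {v₀ : F}
    (hv : Tendsto v l (𝓝 v₀)) (hv₀ : v₀ ∈ s) {ζ : ι → F}
    (hζ : ∀ i w, f (v i) + ⟪ζ i, w - v i⟫ ≤ f w) : Tendsto ζ l (𝓝 (gradient f v₀)) := by
  have hgrad : ContinuousAt (gradient f) v₀ :=
    (InnerProductSpace.toDual ℝ F).symm.continuous.continuousAt.comp
      ((hf.continuousOn_fderiv_of_isOpen hs le_rfl).continuousAt (hs.mem_nhds hv₀))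
  refine (hgrad.tendsto.comp hv).congr' ?_
  filter_upwards [hv (hs.mem_nhds hv₀)] with i hi
  have hdiff := (hf.contDiffAt (hs.mem_nhds hi)).differentiableAt one_ne_zero
  exact (hdiff.hasGradientAt.eq_of_forall_add_inner_le (hζ i)).symm

theorem ContDiff.continuous_gradient {k : WithTop ℕ∞} (hf : ContDiff ℝ k f) (hk : k ≠ 0) :
    Continuous (gradient f) :=
  (InnerProductSpace.toDual ℝ F).symm.continuous.comp (hf.continuous_fderiv hk)

theorem measurable_gradient [MeasurableSpace F] [BorelSpace F] (f : F → ℝ) :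
    Measurable (gradient f) :=
  (InnerProductSpace.toDual ℝ F).symm.continuous.measurable.comp (measurable_fderiv ℝ f)

end Subgradient

section PosHomogeneous

variable {F : Type*} [NormedAddCommGroup F] [InnerProductSpace ℝ F] {Ψ : F → ℝ}

theorem map_zero_of_posHomogeneous (hΨ : ∀ lam : ℝ, 0 < lam → ∀ z, Ψ (lam • z) = lam * Ψ z) :
    Ψ 0 = 0 := by
  have := hΨ 2 two_pos 0
  rw [smul_zero] at this
  linarith

theorem inner_le_of_forall_add_inner_le (hΨ : ∀ lam : ℝ, 0 < lam → ∀ z, Ψ (lam • z) = lam * Ψ z)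
    {v ζ : F} (hζ : ∀ w, Ψ v + ⟪ζ, w - v⟫ ≤ Ψ w) (w : F) : ⟪ζ, w⟫ ≤ Ψ w := by
  -- testing at `0` and at `2 • v` gives `⟪ζ, v⟫ = Ψ v`
  have h0 := hζ 0
  have h2 := hζ ((2 : ℝ) • v)
  rw [map_zero_of_posHomogeneous hΨ, zero_sub, inner_neg_right] at h0
  rw [hΨ 2 two_pos, two_smul, add_sub_cancel_right] at h2
  linarith [hζ w, inner_sub_right (𝕜 := ℝ) ζ w v]

theorem exists_norm_le_of_forall_inner_le [ProperSpace F] (hΨ : Continuous Ψ) :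
    ∃ L, ∀ ζ : F, (∀ w, ⟪ζ, w⟫ ≤ Ψ w) → ‖ζ‖ ≤ L := by
  obtain ⟨L, hL⟩ :=
    (isCompact_closedBall (0 : F) 1).exists_bound_of_continuousOn hΨ.continuousOn
  refine ⟨L, fun ζ hζ => ?_⟩
  rcases eq_or_ne ζ 0 with rfl | hζ0
  · simpa using (hζ 0).trans ((le_abs_self _).trans (hL 0 (mem_closedBall_self zero_le_one)))
  · have hunit : ‖ζ‖⁻¹ • ζ ∈ closedBall (0 : F) 1 := by simp [norm_smul, hζ0]
    calc ‖ζ‖ = ⟪ζ, ‖ζ‖⁻¹ • ζ⟫ := by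
          rw [real_inner_smul_right, real_inner_self_eq_norm_sq]
          field_simp [norm_ne_zero_iff.2 hζ0]
      _ ≤ Ψ (‖ζ‖⁻¹ • ζ) := hζ _
      _ ≤ L := (le_abs_self _).trans (hL _ hunit)

end PosHomogeneous

-- Banach–Alaoglu in `H* ≃ H`; an ultrafilter finer than `atTop` stands in for a subsequence,
-- which would need `H` to be separable.
theorem exists_ultrafilter_tendsto_inner {H : Type*} [NormedAddCommGroup H]
    [InnerProductSpace ℝ H] [CompleteSpace H] {x : ℕ → H} {R : ℝ} (hx : ∀ N, ‖x N‖ ≤ R) :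
    ∃ 𝒰 : Ultrafilter ℕ, (𝒰 : Filter ℕ) ≤ atTop ∧
      ∃ y : H, ∀ g, Tendsto (fun N => ⟪x N, g⟫) (𝒰 : Filter ℕ) (𝓝 ⟪y, g⟫) := by
  let D := InnerProductSpace.toDual ℝ H
  let x' : ℕ → WeakDual ℝ H := fun N => StrongDual.toWeakDual (D (x N))
  have hx' : ↑((Ultrafilter.of atTop).map x') ≤
      𝓟 (WeakDual.toStrongDual ⁻¹' closedBall (0 : StrongDual ℝ H) R) := by
    refine le_principal_iff.2 (Ultrafilter.mem_map.2 (univ_mem' fun N => ?_))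
    simpa [x', D] using hx N
  obtain ⟨ℓ, -, hℓ⟩ :=
    (WeakDual.isCompact_closedBall (0 : StrongDual ℝ H) R).ultrafilter_le_nhds _ hx'
  refine ⟨_, Ultrafilter.of_le _, D.symm (WeakDual.toStrongDual ℓ), fun g => ?_⟩
  have hℓg : ℓ g = ⟪D.symm (WeakDual.toStrongDual ℓ), g⟫ := by simp [D]
  rw [← hℓg]
  exact (((WeakDual.eval_continuous g).tendsto ℓ).comp hℓ).congr fun N => by simp [x', D]

section WeakL2

variable {α : Type*} [MeasurableSpace α] {μ : Measure α} {ι : Type*} {l : Filter ι}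
  {E : Type*} [NormedAddCommGroup E] [InnerProductSpace ℝ E]

def TendstoWeakL2 (μ : Measure α) (l : Filter ι) (F : ι → α → E) (f : α → E) : Prop :=
  ∀ g : α → E, MemLp g 2 μ →
    Tendsto (fun i => ∫ x, ⟪F i x, g x⟫ ∂μ) l (𝓝 (∫ x, ⟪f x, g x⟫ ∂μ))

theorem TendstoWeakL2.mono_left {l' : Filter ι} {F : ι → α → E} {f : α → E}
    (h : TendstoWeakL2 μ l F f) (hl : l' ≤ l) : TendstoWeakL2 μ l' F f :=
  fun g hg => (h g hg).mono_left hl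

theorem MeasureTheory.MemLp.integral_inner_eq_inner_toLp {f g : α → E} (hf : MemLp f 2 μ)
    (hg : MemLp g 2 μ) : ∫ x, ⟪f x, g x⟫ ∂μ = ⟪hf.toLp f, hg.toLp g⟫ := by
  rw [L2.inner_def]
  refine integral_congr_ae ?_
  filter_upwards [hf.coeFn_toLp, hg.coeFn_toLp] with x hfx hgx
  rw [hfx, hgx]

theorem exists_tendstoWeakL2_of_ae_norm_le [CompleteSpace E] [IsFiniteMeasure μ]
    {F : ℕ → α → E} {C : ℝ} (hF : ∀ N, AEStronglyMeasurable (F N) μ)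
    (hC : ∀ N, ∀ᵐ x ∂μ, ‖F N x‖ ≤ C) :
    ∃ 𝒰 : Ultrafilter ℕ, (𝒰 : Filter ℕ) ≤ atTop ∧
      ∃ f : α → E, StronglyMeasurable f ∧ MemLp f 2 μ ∧ TendstoWeakL2 μ 𝒰 F f := by
  have hF2 : ∀ N, MemLp (F N) 2 μ := fun N => MemLp.of_bound (hF N) C (hC N)
  obtain ⟨𝒰, h𝒰, f, hf⟩ := exists_ultrafilter_tendsto_inner (x := fun N => (hF2 N).toLp (F N))
    fun N => Lp.norm_le_of_ae_bound (abs_nonneg C) <| by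
      filter_upwards [(hF2 N).coeFn_toLp, hC N] with x hx hCx
      exact hx ▸ hCx.trans (le_abs_self C)
  refine ⟨𝒰, h𝒰, f, Lp.stronglyMeasurable f, Lp.memLp f, fun g hg => ?_⟩
  simpa only [(hF2 _).integral_inner_eq_inner_toLp hg,
    (Lp.memLp f).integral_inner_eq_inner_toLp hg, Lp.toLp_coeFn] using hf (hg.toLp g)

theorem TendstoWeakL2.indicator {F : ι → α → E} {f : α → E} (h : TendstoWeakL2 μ l F f)
    {A : Set α} (hA : MeasurableSet A) :
    TendstoWeakL2 μ l (fun i => A.indicator (F i)) (A.indicator f) := by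
  have hswap : ∀ (G g : α → E) x, ⟪A.indicator G x, g x⟫ = ⟪G x, A.indicator g x⟫ := by
    intro G g x
    by_cases hx : x ∈ A <;> simp [hx]
  intro g hg
  simpa only [hswap] using h _ (hg.indicator hA)

theorem tendstoWeakL2_of_tendsto_ae [IsFiniteMeasure μ] {F : ℕ → α → E} {f : α → E} {C : ℝ}
    (hF : ∀ N, AEStronglyMeasurable (F N) μ) (hC : ∀ N, ∀ᵐ x ∂μ, ‖F N x‖ ≤ C)
    (hlim : ∀ᵐ x ∂μ, Tendsto (fun N => F N x) atTop (𝓝 (f x))) :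
    TendstoWeakL2 μ atTop F f := by
  intro g hg
  refine tendsto_integral_of_dominated_convergence (fun x => C * ‖g x‖)
    (fun N => (hF N).inner hg.1) ((hg.integrable one_le_two).norm.const_mul C) (fun N => ?_) ?_
  · filter_upwards [hC N] with x hx
    exact (norm_inner_le_norm _ _).trans (mul_le_mul_of_nonneg_right hx (norm_nonneg _))
  · filter_upwards [hlim] with x hx
    exact hx.inner tendsto_const_nhds

theorem Continuous.tendstoWeakL2_comp [IsFiniteMeasure μ] {V : Type*} [NormedAddCommGroup V]
    [ProperSpace V] {Φ : V → E} (hΦ : Continuous Φ) {G : ℕ → α → V} {G₀ : α → V} {M : ℝ}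
    (hG : ∀ N, AEStronglyMeasurable (G N) μ) (hM : ∀ N, ∀ᵐ x ∂μ, ‖G N x‖ ≤ M)
    (hlim : ∀ᵐ x ∂μ, Tendsto (fun N => G N x) atTop (𝓝 (G₀ x))) :
    TendstoWeakL2 μ atTop (fun N x => Φ (G N x)) (fun x => Φ (G₀ x)) := by
  obtain ⟨C, hC⟩ :=
    (isCompact_closedBall (0 : V) M).exists_bound_of_continuousOn hΦ.continuousOn
  refine tendstoWeakL2_of_tendsto_ae (C := C) (fun N => hΦ.comp_aestronglyMeasurable (hG N))
    (fun N => (hM N).mono fun x hx => hC _ (mem_closedBall_zero_iff.2 hx)) ?_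
  exact hlim.mono fun x hx => (hΦ.tendsto _).comp hx

theorem TendstoWeakL2.ae_eq [l.NeBot] {F : ι → α → E} {f f' : α → E}
    (h : TendstoWeakL2 μ l F f) (h' : TendstoWeakL2 μ l F f') (hf : MemLp f 2 μ)
    (hf' : MemLp f' 2 μ) : f =ᵐ[μ] f' := by
  have horth : ∀ g (hg : MemLp g 2 μ), ⟪hf.toLp f - hf'.toLp f', hg.toLp g⟫ = 0 := by
    intro g hg
    rw [inner_sub_left, ← hf.integral_inner_eq_inner_toLp hg,
      ← hf'.integral_inner_eq_inner_toLp hg, tendsto_nhds_unique (h g hg) (h' g hg), sub_self]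
  have := horth _ (hf.sub hf')
  rw [MemLp.toLp_sub hf hf', inner_self_eq_zero, sub_eq_zero] at this
  exact (MemLp.toLp_eq_toLp_iff hf hf').1 this

theorem TendstoWeakL2.ae_eq_of_tendsto_ae [IsFiniteMeasure μ] {l : Filter ℕ} [l.NeBot]
    {F : ℕ → α → E} {f f' : α → E} {C : ℝ} (h : TendstoWeakL2 μ l F f) (hl : l ≤ atTop)
    (hf : MemLp f 2 μ) (hF : ∀ N, AEStronglyMeasurable (F N) μ)
    (hC : ∀ N, ∀ᵐ x ∂μ, ‖F N x‖ ≤ C)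
    (hlim : ∀ᵐ x ∂μ, Tendsto (fun N => F N x) atTop (𝓝 (f' x))) : f =ᵐ[μ] f' := by
  have hf' : MemLp f' 2 μ := by
    refine MemLp.of_bound (aestronglyMeasurable_of_tendsto_ae atTop hF hlim) C ?_
    filter_upwards [hlim, ae_all_iff.2 hC] with x hx hCx
    exact le_of_tendsto' hx.norm hCx
  exact h.ae_eq ((tendstoWeakL2_of_tendsto_ae hF hC hlim).mono_left hl) hf hf'

theorem TendstoWeakL2.ae_inner_le [IsFiniteMeasure μ] [l.NeBot] {F : ι → α → E} {f : α → E}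
    (h : TendstoWeakL2 μ l F f) (hF : ∀ i, Integrable (F i) μ) (hf : Integrable f μ)
    {w : E} {c : ℝ} (hc : ∀ i, ∀ᵐ x ∂μ, ⟪F i x, w⟫ ≤ c) : ∀ᵐ x ∂μ, ⟪f x, w⟫ ≤ c := by
  refine ae_le_of_forall_setIntegral_le (hf.inner_const w) (integrable_const c) fun s hs _ => ?_
  have htest : ∀ G : α → E,
      ∫ x, ⟪G x, s.indicator (fun _ => w) x⟫ ∂μ = ∫ x in s, ⟪G x, w⟫ ∂μ := by
    intro G
    rw [← integral_indicator hs]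
    congr 1 with x
    by_cases hx : x ∈ s <;> simp [hx]
  have hlim := h _ ((memLp_const w).indicator hs)
  simp only [htest] at hlim
  exact le_of_tendsto' hlim fun i =>
    setIntegral_mono_ae ((hF i).inner_const w).integrableOn (integrable_const c).integrableOn (hc i)

theorem TendstoWeakL2.ae_forall_inner_le [TopologicalSpace.SeparableSpace E] [IsFiniteMeasure μ]
    [l.NeBot] {F : ι → α → E} {f : α → E} (h : TendstoWeakL2 μ l F f)
    (hF : ∀ i, Integrable (F i) μ) (hf : Integrable f μ) {Ψ : E → ℝ} (hΨ : Continuous Ψ)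
    (hc : ∀ i, ∀ᵐ x ∂μ, ∀ w, ⟪F i x, w⟫ ≤ Ψ w) : ∀ᵐ x ∂μ, ∀ w, ⟪f x, w⟫ ≤ Ψ w := by
  let w : ℕ → E := TopologicalSpace.denseSeq E
  have hdense : ∀ᵐ x ∂μ, ∀ k, ⟪f x, w k⟫ ≤ Ψ (w k) := ae_all_iff.2 fun k =>
    h.ae_inner_le hF hf fun i => (hc i).mono fun x hx => hx (w k)
  filter_upwards [hdense] with x hx
  have hclosed : IsClosed {v | ⟪f x, v⟫ ≤ Ψ v} :=
    isClosed_le (continuous_const.inner continuous_id) hΨ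
  intro v
  exact hclosed.closure_subset_iff.2 (range_subset_iff.2 hx)
    ((TopologicalSpace.denseRange_denseSeq E).closure_range ▸ mem_univ v)

theorem tendsto_integral_mul_of_tendsto_eLpNorm [IsFiniteMeasure μ] {q : ℝ≥0∞} (hq : 1 ≤ q)
    {f : ι → α → ℝ} (hf : ∀ i, MemLp (f i) q μ)
    (hlim : Tendsto (fun i => eLpNorm (f i) q μ) l (𝓝 0)) {φ : α → ℝ} (hφ : MemLp φ ∞ μ) :
    Tendsto (fun i => ∫ x, f i x * φ x ∂μ) l (𝓝 0) := by
  set c := eLpNorm φ ∞ μ * μ univ ^ (1 / (1 : ℝ≥0∞).toReal - 1 / q.toReal)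
  have hc : c ≠ ∞ := by
    refine ENNReal.mul_ne_top hφ.eLpNorm_ne_top
      (ENNReal.rpow_ne_top_of_nonneg ?_ (measure_ne_top μ univ))
    rw [ENNReal.toReal_one, one_div_one, sub_nonneg]
    rcases eq_or_ne q ∞ with rfl | hq'
    · simp
    · exact div_le_one_of_le₀ (ENNReal.toReal_one ▸ ENNReal.toReal_mono hq' hq)
        ENNReal.toReal_nonneg
  have hL1 : ∀ i, eLpNorm (f i • φ) 1 μ ≤ eLpNorm (f i) q μ * c := fun i =>
    calc eLpNorm (f i • φ) 1 μ
        ≤ eLpNorm (f i • φ) q μ * μ univ ^ (1 / (1 : ℝ≥0∞).toReal - 1 / q.toReal) :=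
          eLpNorm_le_eLpNorm_mul_rpow_measure_univ hq ((hf i).1.smul hφ.1)
      _ ≤ eLpNorm (f i) q μ * c := by
          rw [← mul_assoc]
          gcongr
          exact eLpNorm_smul_le_eLpNorm_mul_eLpNorm_top q φ (hf i).1
  have := tendsto_integral_of_L1' (0 : α → ℝ) aestronglyMeasurable_zero
    (Eventually.of_forall fun i => ((hf i).integrable hq).mul_of_top_left hφ)
    (tendsto_of_tendsto_of_tendsto_of_le_of_le tendsto_const_nhds
      (by simpa using ENNReal.Tendsto.mul_const hlim (Or.inr hc)) (fun i => zero_le)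
      (fun i => by simpa using hL1 i))
  simpa using this

end WeakL2

section TestFunction

variable {n : ℕ} {ω : Set (EuclideanSpace ℝ (Fin n))} {φ : EuclideanSpace ℝ (Fin n) → ℝ}

theorem IsTestOn.memLp_top (hφ : IsTestOn ω φ) (μ : Measure (EuclideanSpace ℝ (Fin n))) :
    MemLp φ ∞ μ :=
  hφ.1.continuous.memLp_top_of_hasCompactSupport hφ.2.1 μ

theorem IsTestOn.memLp_gradient (hφ : IsTestOn ω φ) (μ : Measure (EuclideanSpace ℝ (Fin n)))
    [IsFiniteMeasure μ] (p : ℝ≥0∞) : MemLp (gradient φ) p μ :=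
  ((hφ.1.continuous_gradient (by simp)).memLp_top_of_hasCompactSupport
    (hφ.2.1.fderiv (𝕜 := ℝ) |>.comp_left (map_zero _)) μ).mono_exponent le_top

end TestFunction

theorem exists_tendstoWeakL2_subgradient_of_tendsto_ae {α E : Type*} [MeasurableSpace α]
    {μ : Measure α} [IsFiniteMeasure μ] [NormedAddCommGroup E] [InnerProductSpace ℝ E]
    [FiniteDimensional ℝ E] [MeasurableSpace E] [BorelSpace E] {Ψ : E → ℝ}
    (hΨconv : ConvexOn ℝ univ Ψ) (hΨcont : Continuous Ψ) (hΨC1 : ContDiffOn ℝ 1 Ψ {0}ᶜ)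
    (hΨhom : ∀ lam : ℝ, 0 < lam → ∀ z, Ψ (lam • z) = lam * Ψ z)
    {v : ℕ → α → E} {v₀ : α → E} {Z : ℕ → α → E} (hZm : ∀ N, AEStronglyMeasurable (Z N) μ)
    (hZ : ∀ N, ∀ᵐ x ∂μ, ∀ w, Ψ (v N x) + ⟪Z N x, w - v N x⟫ ≤ Ψ w) (hv₀ : Measurable v₀)
    (hv : ∀ᵐ x ∂μ, Tendsto (fun N => v N x) atTop (𝓝 (v₀ x))) :
    ∃ 𝒰 : Ultrafilter ℕ, (𝒰 : Filter ℕ) ≤ atTop ∧ ∃ Z₀ : α → E, Measurable Z₀ ∧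
      (∃ C : ℝ, ∀ᵐ x ∂μ, ‖Z₀ x‖ ≤ C) ∧
      (∀ᵐ x ∂μ, ∀ w, Ψ (v₀ x) + ⟪Z₀ x, w - v₀ x⟫ ≤ Ψ w) ∧ TendstoWeakL2 μ 𝒰 Z Z₀ := by
  obtain ⟨L, hL⟩ := exists_norm_le_of_forall_inner_le hΨcont
  have hZK : ∀ N, ∀ᵐ x ∂μ, ∀ w, ⟪Z N x, w⟫ ≤ Ψ w := fun N =>
    (hZ N).mono fun x hx => inner_le_of_forall_add_inner_le hΨhom hx
  have hZL : ∀ N, ∀ᵐ x ∂μ, ‖Z N x‖ ≤ L := fun N => (hZK N).mono fun x hx => hL _ hx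
  obtain ⟨𝒰, h𝒰, Z₀, hZ₀m, hZ₀, hweak⟩ := exists_tendstoWeakL2_of_ae_norm_le hZm hZL
  have hZ₀K : ∀ᵐ x ∂μ, ∀ w, ⟪Z₀ x, w⟫ ≤ Ψ w :=
    hweak.ae_forall_inner_le (fun N => (MemLp.of_bound (hZm N) L (hZL N)).integrable one_le_two)
      (hZ₀.integrable one_le_two) hΨcont hZK
  let A := {x | v₀ x ≠ 0}
  have hA : MeasurableSet A := (hv₀ (measurableSet_singleton 0)).compl
  have hZ₀A : A.indicator Z₀ =ᵐ[μ] A.indicator (fun x => gradient Ψ (v₀ x)) := by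
    refine (hweak.indicator hA).ae_eq_of_tendsto_ae h𝒰 (hZ₀.indicator hA)
      (fun N => (hZm N).indicator hA) (C := L)
      (fun N => (hZL N).mono fun x hx => (norm_indicator_le_norm_self _ _).trans hx) ?_
    filter_upwards [hv, ae_all_iff.2 hZ] with x hvx hZx
    by_cases hx : x ∈ A
    · simpa [indicator_of_mem hx] using
        tendsto_gradient_of_forall_add_inner_le isOpen_compl_singleton hΨC1 hvx hx hZx
    · simp [indicator_of_notMem hx]
  refine ⟨𝒰, h𝒰, Z₀, hZ₀m.measurable, ⟨L, hZ₀K.mono fun x hx => hL _ hx⟩, ?_, hweak⟩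
  filter_upwards [hZ₀K, hZ₀A] with x hxK hxA
  by_cases hx : x ∈ A
  · simp only [indicator_of_mem hx] at hxA
    rw [hxA]
    exact hΨconv.add_inner_le_of_hasGradientAt
      ((hΨC1.differentiableOn one_ne_zero _ hx).differentiableAt
        (isOpen_compl_singleton.mem_nhds hx)).hasGradientAt
  · have hx0 : v₀ x = 0 := by simpa [A] using hx
    simpa [hx0, map_zero_of_posHomogeneous hΨhom] using hxK

theorem stmt_10_general {n : ℕ} (hn : 1 ≤ n) (U : Set (EuclideanSpace ℝ (Fin n)))
    (hUb : Bornology.IsBounded U)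
    (Ψ W : EuclideanSpace ℝ (Fin n) → ℝ)
    (hΨconv : ConvexOn ℝ Set.univ Ψ)
    (hΨcont : Continuous Ψ)
    (hΨC2 : ContDiffOn ℝ 2 Ψ {(0 : EuclideanSpace ℝ (Fin n))}ᶜ)
    (hΨhom : ∀ lam : ℝ, 0 < lam → ∀ z, Ψ (lam • z) = lam * Ψ z)
    (hWC1 : ContDiff ℝ 1 W)
    (uN : ℕ → EuclideanSpace ℝ (Fin n) → ℝ) (u : EuclideanSpace ℝ (Fin n) → ℝ)
    (fN : ℕ → EuclideanSpace ℝ (Fin n) → ℝ)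
    (q : ℝ≥0∞) (hq : (n : ℝ≥0∞) < q)
    (hfN : ∀ N, MemLp (fN N) q (volume.restrict U))
    (hsolN : ∀ N, ∃ ZN : EuclideanSpace ℝ (Fin n) → EuclideanSpace ℝ (Fin n),
      Measurable ZN ∧
      (∃ C : ℝ, ∀ᵐ x ∂(volume.restrict U), ‖ZN x‖ ≤ C) ∧
      (∀ᵐ x ∂(volume.restrict U), ZN x ∈ subdiffFn Ψ (gradient (uN N) x)) ∧
      ∀ φ : EuclideanSpace ℝ (Fin n) → ℝ, IsTestOn U φ →
        (∫ x in U, ⟪ZN x, gradient φ x⟫) +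
          (∫ x in U, ⟪gradient W (gradient (uN N) x), gradient φ x⟫)
          = ∫ x in U, fN N x * φ x)
    (hgrad_bdd : ∃ M : ℝ, 0 < M ∧ ∀ N, ∀ᵐ x ∂(volume.restrict U), ‖gradient (uN N) x‖ ≤ M)
    (hgrad_conv : ∀ᵐ x ∂(volume.restrict U),
      Tendsto (fun N => gradient (uN N) x) atTop (𝓝 (gradient u x)))
    (hfN_conv : Tendsto (fun N => eLpNorm (fN N) q (volume.restrict U)) atTop (𝓝 0)) :
    ∃ Z : EuclideanSpace ℝ (Fin n) → EuclideanSpace ℝ (Fin n),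
      Measurable Z ∧
      (∃ C : ℝ, ∀ᵐ x ∂(volume.restrict U), ‖Z x‖ ≤ C) ∧
      (∀ᵐ x ∂(volume.restrict U), Z x ∈ subdiffFn Ψ (gradient u x)) ∧
      ∀ φ : EuclideanSpace ℝ (Fin n) → ℝ, IsTestOn U φ →
        (∫ x in U, ⟪Z x, gradient φ x⟫) +
          (∫ x in U, ⟪gradient W (gradient u x), gradient φ x⟫) = 0 := by
  have : IsFiniteMeasure (volume.restrict U) := isFiniteMeasure_restrict.2 hUb.measure_lt_top.ne
  have hq1 : 1 ≤ q := le_of_lt (lt_of_le_of_lt (by exact_mod_cast hn) hq)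
  choose Z hZm _ hZsub hZeq using hsolN
  obtain ⟨𝒰, h𝒰, Z₀, hZ₀m, hZ₀bdd, hZ₀sub, hweak⟩ :=
    exists_tendstoWeakL2_subgradient_of_tendsto_ae hΨconv hΨcont (hΨC2.of_le one_le_two) hΨhom
      (fun N => (hZm N).aestronglyMeasurable) hZsub (measurable_gradient u) hgrad_conv
  obtain ⟨M, -, hM⟩ := hgrad_bdd
  have hW := (hWC1.continuous_gradient one_ne_zero).tendstoWeakL2_comp
    (fun N => (measurable_gradient (uN N)).aestronglyMeasurable) hM hgrad_conv
  refine ⟨Z₀, hZ₀m, hZ₀bdd, hZ₀sub, fun φ hφ => ?_⟩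
  have hlhs := (hweak _ (hφ.memLp_gradient _ 2)).add ((hW _ (hφ.memLp_gradient _ 2)).mono_left h𝒰)
  have hrhs := tendsto_integral_mul_of_tendsto_eLpNorm hq1 hfN hfN_conv (hφ.memLp_top _)
  exact tendsto_nhds_unique (hlhs.congr fun N => hZeq N φ hφ) (hrhs.mono_left h𝒰)

/-- **Stability of the generalized equation under a.e. gradient convergence.** If `u_N` solves
`−div(∇Ψ(∇u_N)) − div(∇W(∇u_N)) = f_N` weakly in a bounded open set `U`, with uniformly bounded
gradients converging a.e. to `∇u`, and `f_N → 0` in `L^q(U)` with `n < q`, then `u` solves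
`−div(∇Ψ(∇u)) − div(∇W(∇u)) = 0` weakly in `U`. -/
theorem stmt_10 {n : ℕ} (hn : 1 ≤ n) (U : Set (EuclideanSpace ℝ (Fin n)))
    (hUo : IsOpen U) (hUb : Bornology.IsBounded U)
    (Ψ W : EuclideanSpace ℝ (Fin n) → ℝ)
    (hΨnn : ∀ z, 0 ≤ Ψ z)
    (hΨconv : ConvexOn ℝ Set.univ Ψ)
    (hΨcont : Continuous Ψ)
    (hΨC2 : ContDiffOn ℝ 2 Ψ {(0 : EuclideanSpace ℝ (Fin n))}ᶜ)
    (hΨhom : ∀ lam : ℝ, 0 < lam → ∀ z, Ψ (lam • z) = lam * Ψ z)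
    (hWconv : ConvexOn ℝ Set.univ W)
    (hWC1 : ContDiff ℝ 1 W)
    (hW0 : gradient W 0 = 0)
    (uN : ℕ → EuclideanSpace ℝ (Fin n) → ℝ) (u : EuclideanSpace ℝ (Fin n) → ℝ)
    (huN_lip : ∀ N, ∃ K : NNReal, LipschitzOnWith K (uN N) U)
    (hu_lip : ∃ K : NNReal, LipschitzOnWith K u U)
    (fN : ℕ → EuclideanSpace ℝ (Fin n) → ℝ)
    (q : ℝ≥0∞) (hq : (n : ℝ≥0∞) < q)
    (hfN : ∀ N, MemLp (fN N) q (volume.restrict U))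
    (hsolN : ∀ N, ∃ ZN : EuclideanSpace ℝ (Fin n) → EuclideanSpace ℝ (Fin n),
      Measurable ZN ∧
      (∃ C : ℝ, ∀ᵐ x ∂(volume.restrict U), ‖ZN x‖ ≤ C) ∧
      (∀ᵐ x ∂(volume.restrict U), ZN x ∈ subdiffFn Ψ (gradient (uN N) x)) ∧
      ∀ φ : EuclideanSpace ℝ (Fin n) → ℝ, IsTestOn U φ →
        (∫ x in U, ⟪ZN x, gradient φ x⟫) +
          (∫ x in U, ⟪gradient W (gradient (uN N) x), gradient φ x⟫)
          = ∫ x in U, fN N x * φ x)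
    (hgrad_bdd : ∃ M : ℝ, 0 < M ∧ ∀ N, ∀ᵐ x ∂(volume.restrict U), ‖gradient (uN N) x‖ ≤ M)
    (hgrad_conv : ∀ᵐ x ∂(volume.restrict U),
      Tendsto (fun N => gradient (uN N) x) atTop (𝓝 (gradient u x)))
    (hfN_conv : Tendsto (fun N => eLpNorm (fN N) q (volume.restrict U)) atTop (𝓝 0)) :
    ∃ Z : EuclideanSpace ℝ (Fin n) → EuclideanSpace ℝ (Fin n),
      Measurable Z ∧
      (∃ C : ℝ, ∀ᵐ x ∂(volume.restrict U), ‖Z x‖ ≤ C) ∧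
      (∀ᵐ x ∂(volume.restrict U), Z x ∈ subdiffFn Ψ (gradient u x)) ∧
      ∀ φ : EuclideanSpace ℝ (Fin n) → ℝ, IsTestOn U φ →
        (∫ x in U, ⟪Z x, gradient φ x⟫) +
          (∫ x in U, ⟪gradient W (gradient u x), gradient φ x⟫) = 0 :=
  stmt_10_general hn U hUb Ψ W hΨconv hΨcont hΨC2 hΨhom hWC1 uN u fN q hq hfN hsolN hgrad_bdd
    hgrad_conv hfN_conv
end
end

section
/- Let n ≥ 1 and let W : ℝⁿ → ℝ be convex, continuously differentiable on ℝⁿ, twice continuously differentiable on ℝⁿ ∖ {0}, with ∇W(0) = 0, and such that for all 0 < μ ≤ M < ∞ there exists γ > 0 with ⟨∇²W(z₀)ζ, ζ⟩ ≥ γ|ζ|² for all ζ ∈ ℝⁿ and all z₀ with μ ≤ |z₀| ≤ M. Then the gradient map is strictly monotone: for all z₁, z₂ ∈ ℝⁿ with z₁ ≠ z₂, ⟨∇W(z₂) − ∇W(z₁), z₂ − z₁⟩ > 0. In particular, ⟨∇W(z), z⟩ > 0 for every z ∈ ℝⁿ with z ≠ 0. -/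
open MeasureTheory Set Metric Filter
open scoped RealInnerProductSpace Topology ENNReal

/-!
Restrict to the segment `t ↦ z₁ + t (z₂ - z₁)` and set `g t = ⟪∇W(z₁ + t (z₂ - z₁)), z₂ - z₁⟫`.
Then `g` is continuous, and wherever the segment avoids the origin (that is, for all but at most
one `t`) its derivative is the Hessian quadratic form at `z₂ - z₁`, which is positive. A continuous
function with positive derivative off a single point is strictly increasing, so `g 0 < g 1`.
-/

noncomputable section

theorem ContDiffAt.gradient {E : Type*} [NormedAddCommGroup E] [InnerProductSpace ℝ E]
    [CompleteSpace E] {f : E → ℝ} {x : E} {n : WithTop ℕ∞} (hf : ContDiffAt ℝ (n + 1) f x) :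
    ContDiffAt ℝ n (gradient f) x :=
  (InnerProductSpace.toDual ℝ E).symm.contDiff.comp_contDiffAt x hf.fderiv_right_succ

theorem strictMono_of_deriv_pos_of_ne {f : ℝ → ℝ} {t₀ : ℝ} (hf : Continuous f)
    (hf' : ∀ t ≠ t₀, 0 < deriv f t) : StrictMono f := by
  have hIic : StrictMonoOn f (Iic t₀) :=
    strictMonoOn_of_deriv_pos (convex_Iic t₀) hf.continuousOn fun t ht ↦
      hf' t (by rw [interior_Iic] at ht; exact ht.ne)
  have hIci : StrictMonoOn f (Ici t₀) :=
    strictMonoOn_of_deriv_pos (convex_Ici t₀) hf.continuousOn fun t ht ↦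
      hf' t (by rw [interior_Ici] at ht; exact ht.ne')
  exact hIic.Iic_union_Ici hIci

theorem AffineMap.exists_lineMap_ne_of_ne {V : Type*} [AddCommGroup V] [Module ℝ V]
    {z₁ z₂ : V} (h : z₁ ≠ z₂) (p : V) : ∃ t₀ : ℝ, ∀ t ≠ t₀, lineMap z₁ z₂ t ≠ p := by
  by_cases hp : ∃ t₀ : ℝ, lineMap z₁ z₂ t₀ = p
  · obtain ⟨t₀, ht₀⟩ := hp
    exact ⟨t₀, fun t ht htp ↦ ht (lineMap_injective ℝ h (htp.trans ht₀.symm))⟩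
  · exact ⟨0, fun t _ htp ↦ hp ⟨t, htp⟩⟩

theorem inner_gradient_sub_pos_of_hessian_pos {E : Type*} [NormedAddCommGroup E]
    [InnerProductSpace ℝ E] [CompleteSpace E] {f : E → ℝ} {p : E} (hf : ContDiff ℝ 1 f)
    (hf₂ : ContDiffOn ℝ 2 f {p}ᶜ)
    (hpos : ∀ z ≠ p, ∀ ζ ≠ 0, 0 < ⟪fderiv ℝ (gradient f) z ζ, ζ⟫)
    {z₁ z₂ : E} (hne : z₁ ≠ z₂) :
    0 < ⟪gradient f z₂ - gradient f z₁, z₂ - z₁⟫ := by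
  set ψ : ℝ → E := ⇑(AffineMap.lineMap (k := ℝ) z₁ z₂)
  set g : ℝ → ℝ := fun t ↦ ⟪gradient f (ψ t), z₂ - z₁⟫
  obtain ⟨t₀, ht₀⟩ := AffineMap.exists_lineMap_ne_of_ne hne p
  have hg_cont : Continuous g := by
    have hgrad : Continuous (gradient f) := continuous_iff_continuousAt.2 fun _ ↦
      (ContDiffAt.gradient (n := 0) hf.contDiffAt).continuousAt
    exact (hgrad.comp AffineMap.lineMap_continuous).inner continuous_const
  have hg_deriv : ∀ t ≠ t₀, 0 < deriv g t := by
    intro t ht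
    have hψt : ψ t ≠ p := ht₀ t ht
    have hdiff : DifferentiableAt ℝ (gradient f) (ψ t) :=
      ((hf₂.contDiffAt (isOpen_compl_singleton.mem_nhds hψt)).gradient (n := 1)).differentiableAt
        one_ne_zero
    have hg : HasDerivAt g _ t :=
      (hdiff.hasFDerivAt.comp_hasDerivAt t AffineMap.hasDerivAt_lineMap).inner ℝ
        (hasDerivAt_const t (z₂ - z₁))
    rw [hg.deriv, inner_zero_right, zero_add]
    exact hpos _ hψt _ (sub_ne_zero.2 hne.symm)
  simpa [g, ψ, inner_sub_left] using
    strictMono_of_deriv_pos_of_ne hg_cont hg_deriv zero_lt_one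

theorem stmt_13_general {n : ℕ}
    (W : EuclideanSpace ℝ (Fin n) → ℝ)
    (hWC1 : ContDiff ℝ 1 W)
    (hWC2 : ContDiffOn ℝ 2 W {(0 : EuclideanSpace ℝ (Fin n))}ᶜ)
    (hW0 : gradient W 0 = 0)
    (hWell : ∀ μ M : ℝ, 0 < μ → μ ≤ M →
      ∃ γ : ℝ, 0 < γ ∧
        ∀ z₀ : EuclideanSpace ℝ (Fin n), μ ≤ ‖z₀‖ → ‖z₀‖ ≤ M →
          ∀ ζ : EuclideanSpace ℝ (Fin n),
            γ * ‖ζ‖ ^ 2 ≤ ⟪fderiv ℝ (gradient W) z₀ ζ, ζ⟫) :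
    (∀ z₁ z₂ : EuclideanSpace ℝ (Fin n), z₁ ≠ z₂ →
      0 < ⟪gradient W z₂ - gradient W z₁, z₂ - z₁⟫) ∧
    (∀ z : EuclideanSpace ℝ (Fin n), z ≠ 0 → 0 < ⟪gradient W z, z⟫) := by
  have hHess : ∀ z ≠ 0, ∀ ζ ≠ 0, 0 < ⟪fderiv ℝ (gradient W) z ζ, ζ⟫ := by
    intro z hz ζ hζ
    obtain ⟨γ, hγ, hγle⟩ := hWell ‖z‖ ‖z‖ (norm_pos_iff.2 hz) le_rfl
    exact (mul_pos hγ (pow_pos (norm_pos_iff.2 hζ) 2)).trans_le (hγle z le_rfl le_rfl ζ)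
  have hmono : ∀ z₁ z₂ : EuclideanSpace ℝ (Fin n), z₁ ≠ z₂ →
      0 < ⟪gradient W z₂ - gradient W z₁, z₂ - z₁⟫ := fun _ _ hne ↦
    inner_gradient_sub_pos_of_hessian_pos hWC1 hWC2 hHess hne
  refine ⟨hmono, fun z hz ↦ ?_⟩
  simpa [hW0] using hmono 0 z hz.symm

/-- **Strict monotonicity of `∇W`.** For a convex `W`, `C¹` on `ℝⁿ`, `C²` away from the origin,
with `∇W(0) = 0` and Hessian uniformly positive on annuli, the gradient map is strictly
monotone; in particular `⟨∇W(z), z⟩ > 0` for `z ≠ 0`. -/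
theorem stmt_13 {n : ℕ} (hn : 1 ≤ n)
    (W : EuclideanSpace ℝ (Fin n) → ℝ)
    (hWconv : ConvexOn ℝ Set.univ W)
    (hWC1 : ContDiff ℝ 1 W)
    (hWC2 : ContDiffOn ℝ 2 W {(0 : EuclideanSpace ℝ (Fin n))}ᶜ)
    (hW0 : gradient W 0 = 0)
    (hWell : ∀ μ M : ℝ, 0 < μ → μ ≤ M →
      ∃ γ : ℝ, 0 < γ ∧
        ∀ z₀ : EuclideanSpace ℝ (Fin n), μ ≤ ‖z₀‖ → ‖z₀‖ ≤ M →
          ∀ ζ : EuclideanSpace ℝ (Fin n),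
            γ * ‖ζ‖ ^ 2 ≤ ⟪fderiv ℝ (gradient W) z₀ ζ, ζ⟫) :
    (∀ z₁ z₂ : EuclideanSpace ℝ (Fin n), z₁ ≠ z₂ →
      0 < ⟪gradient W z₂ - gradient W z₁, z₂ - z₁⟫) ∧
    (∀ z : EuclideanSpace ℝ (Fin n), z ≠ 0 → 0 < ⟪gradient W z, z⟫) :=
  stmt_13_general W hWC1 hWC2 hW0 hWell
end
end

section
/- Let n ≥ 1, let U ⊆ ℝⁿ be a convex open set, and let u_N : U → ℝ (N ∈ ℕ) be a sequence of convex functions that is uniformly Lipschitz: there exists L > 0 with |u_N(x) − u_N(y)| ≤ L|x − y| for all x, y ∈ U and all N. Suppose there is a function u_∞ : U → ℝ with u_N(x) → u_∞(x) as N → ∞ for every x ∈ U. Then for almost every x ∈ U (with respect to Lebesgue measure), all the functions u_N and u_∞ are differentiable at x and ∇u_N(x) → ∇u_∞(x) as N → ∞. -/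
open MeasureTheory Set Metric Filter
open scoped RealInnerProductSpace Topology ENNReal

noncomputable section

section Helpers

variable {E : Type*} [NormedAddCommGroup E] [InnerProductSpace ℝ E] [CompleteSpace E]

lemma inner_gradient_eq {f : E → ℝ} {x v : E} :
    ⟪gradient f x, v⟫ = fderiv ℝ f x v := by
  rw [gradient]
  exact InnerProductSpace.toDual_symm_apply

lemma tendsto_slope_dir {f : E → ℝ} {x : E} (hf : DifferentiableAt ℝ f x) (v : E) :
    Tendsto (fun t : ℝ => (f (x + t • v) - f x) / t) (𝓝[>] (0 : ℝ))
      (𝓝 ⟪gradient f x, v⟫) := by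
  have hc : HasDerivAt (fun t : ℝ => x + t • v) v 0 := by
    simpa using ((hasDerivAt_id (0 : ℝ)).smul_const v).const_add x
  have h1 : HasDerivAt (fun t : ℝ => f (x + t • v)) (fderiv ℝ f x v) 0 := by
    exact HasFDerivAt.comp_hasDerivAt 0 (by simpa using hf.hasFDerivAt) hc
  rw [hasDerivAt_iff_tendsto_slope] at h1
  rw [inner_gradient_eq]
  have h2 : Tendsto (slope (fun t : ℝ => f (x + t • v)) 0) (𝓝[>] (0 : ℝ))
      (𝓝 (fderiv ℝ f x v)) :=
    h1.mono_left (nhdsWithin_mono _ fun t ht => ne_of_gt ht)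
  refine h2.congr' ?_
  filter_upwards [self_mem_nhdsWithin] with t ht
  simp [slope_def_field, div_eq_inv_mul]

lemma subgradient_ineq {U : Set E} (hUc : Convex ℝ U) {f : E → ℝ}
    (hf : ConvexOn ℝ U f) {x : E} (hx : x ∈ U) (hd : DifferentiableAt ℝ f x)
    {y : E} (hy : y ∈ U) : ⟪gradient f x, y - x⟫ ≤ f y - f x := by
  refine le_of_tendsto (tendsto_slope_dir hd (y - x)) ?_
  filter_upwards [Ioo_mem_nhdsGT (show (0:ℝ) < 1 by norm_num)] with t ht
  have hpt : x + t • (y - x) = (1 - t) • x + t • y := by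
    rw [smul_sub, sub_smul, one_smul]; abel
  have hmem := hf.2 hx hy (by linarith [ht.2] : (0:ℝ) ≤ 1 - t) ht.1.le (by ring)
  rw [← hpt] at hmem
  rw [smul_eq_mul, smul_eq_mul] at hmem
  rw [div_le_iff₀ ht.1]
  nlinarith [hmem]

lemma eq_gradient_of_subgradient {U : Set E} (hUo : IsOpen U) {f : E → ℝ}
    {x : E} (hx : x ∈ U) (hd : DifferentiableAt ℝ f x) {p : E}
    (hp : ∀ y ∈ U, ⟪p, y - x⟫ ≤ f y - f x) : p = gradient f x := by
  have key : ∀ v : E, ⟪p, v⟫ ≤ ⟪gradient f x, v⟫ := by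
    intro v
    refine ge_of_tendsto (tendsto_slope_dir hd v) ?_
    have hwait : ∀ᶠ t : ℝ in 𝓝 0, x + t • v ∈ U := by
      have hcont : Tendsto (fun t : ℝ => x + t • v) (𝓝 0) (𝓝 x) := by
        have : Tendsto (fun t : ℝ => x + t • v) (𝓝 0) (𝓝 (x + (0:ℝ) • v)) := by
          exact (tendsto_const_nhds.add ((continuous_id.smul continuous_const).tendsto 0))
        simpa using this
      exact hcont.eventually (hUo.mem_nhds hx)
    filter_upwards [eventually_nhdsWithin_of_eventually_nhds hwait,
      self_mem_nhdsWithin] with t htU ht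
    have h1 := hp _ htU
    rw [add_sub_cancel_left, inner_smul_right] at h1
    rw [le_div_iff₀ ht, mul_comm]
    exact h1
  have h2 : ⟪p - gradient f x, p - gradient f x⟫ ≤ 0 := by
    have := key (p - gradient f x)
    rwa [← sub_nonpos, ← inner_sub_left] at this
  have := real_inner_self_nonpos.mp h2
  exact sub_eq_zero.mp this

end Helpers

/-- **A.e. convergence of gradients of convex functions.** If a uniformly Lipschitz sequence of
convex functions on a convex open set `U` converges pointwise to `u_∞`, then at almost every
point of `U` all functions are differentiable and the gradients converge. -/
theorem stmt_19 {n : ℕ} (hn : 1 ≤ n) (U : Set (EuclideanSpace ℝ (Fin n)))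
    (hUo : IsOpen U) (hUc : Convex ℝ U)
    (uN : ℕ → EuclideanSpace ℝ (Fin n) → ℝ)
    (hconv : ∀ N, ConvexOn ℝ U (uN N))
    (L : ℝ) (hL : 0 < L)
    (hlip : ∀ N, ∀ x ∈ U, ∀ y ∈ U, |uN N x - uN N y| ≤ L * ‖x - y‖)
    (uInf : EuclideanSpace ℝ (Fin n) → ℝ)
    (hptwise : ∀ x ∈ U, Tendsto (fun N => uN N x) atTop (𝓝 (uInf x))) :
    ∀ᵐ x ∂(volume.restrict U),
      (∀ N, DifferentiableAt ℝ (uN N) x) ∧ DifferentiableAt ℝ uInf x ∧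
      Tendsto (fun N => gradient (uN N) x) atTop (𝓝 (gradient uInf x)) := by
  set K : NNReal := L.toNNReal with hK
  have hKL : (K : ℝ) = L := Real.coe_toNNReal _ hL.le
  have hlipN : ∀ N, LipschitzOnWith K (uN N) U := by
    intro N
    refine LipschitzOnWith.of_dist_le_mul fun x hx y hy => ?_
    rw [Real.dist_eq, dist_eq_norm, hKL]
    exact hlip N x hx y hy
  have hlipInf : LipschitzOnWith K uInf U := by
    refine LipschitzOnWith.of_dist_le_mul fun x hx y hy => ?_
    rw [Real.dist_eq, dist_eq_norm, hKL]
    refine le_of_tendsto (((hptwise x hx).sub (hptwise y hy)).abs) ?_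
    exact Eventually.of_forall fun N => hlip N x hx y hy
  have hUm : MeasurableSet U := hUo.measurableSet
  have hdN : ∀ᵐ x ∂(volume.restrict U), ∀ N, DifferentiableWithinAt ℝ (uN N) U x :=
    ae_all_iff.2 fun N => (hlipN N).ae_differentiableWithinAt hUm
  have hdInf : ∀ᵐ x ∂(volume.restrict U), DifferentiableWithinAt ℝ uInf U x :=
    hlipInf.ae_differentiableWithinAt hUm
  filter_upwards [hdN, hdInf, ae_restrict_mem hUm] with x hxN hxInf hxU
  have hUnhds : U ∈ 𝓝 x := hUo.mem_nhds hxU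
  have hDN : ∀ N, DifferentiableAt ℝ (uN N) x := fun N => (hxN N).differentiableAt hUnhds
  have hDInf : DifferentiableAt ℝ uInf x := hxInf.differentiableAt hUnhds
  refine ⟨hDN, hDInf, ?_⟩
  have hbound : ∀ N, ‖gradient (uN N) x‖ ≤ L := by
    intro N
    rw [gradient, LinearIsometryEquiv.norm_map]
    rw [← hKL]
    exact norm_fderiv_le_of_lipschitzOn ℝ hUnhds (hlipN N)
  refine tendsto_of_subseq_tendsto fun ns hns => ?_
  obtain ⟨p, -, ms, hms, hp⟩ := tendsto_subseq_of_bounded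
    (isBounded_closedBall (x := (0 : EuclideanSpace ℝ (Fin n))) (r := L))
    (fun k => mem_closedBall_zero_iff.2 (hbound (ns k)))
  have hsub : Tendsto (fun k => ns (ms k)) atTop atTop := hns.comp hms.tendsto_atTop
  have hpg : p = gradient uInf x := by
    refine eq_gradient_of_subgradient hUo hxU hDInf fun y hy => ?_
    have hLHS : Tendsto (fun k => ⟪gradient (uN (ns (ms k))) x, y - x⟫) atTop
        (𝓝 ⟪p, y - x⟫) := hp.inner tendsto_const_nhds
    have hRHS : Tendsto (fun k => uN (ns (ms k)) y - uN (ns (ms k)) x) atTop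
        (𝓝 (uInf y - uInf x)) :=
      (((hptwise y hy).sub (hptwise x hxU)).comp hsub)
    refine le_of_tendsto_of_tendsto' hLHS hRHS fun k => ?_
    exact subgradient_ineq hUc (hconv _) hxU (hDN _) hy
  exact ⟨ms, hpg ▸ hp⟩

end
end
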